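/- arXiv:2307.03146 — 8 statements merged into one kernel-verified Lean document; each statement's English description precedes it below -/
import Mathlib

section
/- Let T > 0 and let ℛ : [0,T] → (0,∞) be C¹. Let U ⊆ ℝ² be an open set containing the boundary curve {(t, ℛ(t)) : t ∈ [0,T]}, and let m, ρ, p_rad, v, φ be real-valued functions on U with m of class C¹, satisfying on U: 1 − 2m(t,r)/r > 0, ∂_t m = −4πr²(ρ + p_rad)e^{φ} v ⟨v⟩ and ∂_r m = 4πr²(ρ + (ρ + p_rad)v²/(1 − 2m/r)), where ⟨v⟩ = (1 + v²/(1 − 2m/r))^{1/2}. Assume the boundary conditions p_rad(t, ℛ(t)) = 0 and ℛ'(t) = (e^{φ} v/⟨v⟩)(t, ℛ(t)) for all t ∈ [0,T]. Then the total mass 𝓜(t) = m(t, ℛ(t)) is constant on [0,T]. -/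
/-!
Along the boundary curve `t ↦ (t, ℛ t)` the chain rule gives
`𝓜' = ∂ₜm + ∂ᵣm · ℛ'`. Inserting the Einstein equations and `ℛ' = e^φ v / ⟨v⟩`, and using
`⟨v⟩² = 1 + v²/(1 − 2m/r)`, everything cancels except the pressure work term:
`𝓜' = -4π ℛ² p_rad ℛ'`. This vanishes because the radial pressure is zero at the boundary.
-/

open Real Set

/-- The relativistic Lorentz factor `⟨v⟩ = √(1 + v²/(1 − 2m/r))`. -/
noncomputable def vbar (m v : ℝ × ℝ → ℝ) (x : ℝ × ℝ) : ℝ :=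
  Real.sqrt (1 + (v x) ^ 2 / (1 - 2 * m x / x.2))

theorem eq_left_of_hasDerivWithinAt_Icc_zero {f : ℝ → ℝ} {a b : ℝ}
    (hf : ∀ x ∈ Icc a b, HasDerivWithinAt f 0 (Icc a b) x) :
    ∀ x ∈ Icc a b, f x = f a :=
  constant_of_has_deriv_right_zero (fun x hx => (hf x hx).continuousWithinAt)
    fun x hx => (hf x (Ico_subset_Icc_self hx)).mono_of_mem_nhdsWithin (Icc_mem_nhdsGE_of_mem hx)

theorem HasFDerivAt.hasDerivWithinAt_comp_graph {f : ℝ × ℝ → ℝ} {a b : ℝ} {R : ℝ → ℝ}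
    {R' : ℝ} {s : Set ℝ} {t : ℝ}
    (hf : HasFDerivAt f (a • ContinuousLinearMap.fst ℝ ℝ ℝ + b • ContinuousLinearMap.snd ℝ ℝ ℝ)
      (t, R t))
    (hR : HasDerivWithinAt R R' s t) :
    HasDerivWithinAt (fun τ => f (τ, R τ)) (a + b * R') s t := by
  have h := hf.comp_hasDerivWithinAt t ((hasDerivWithinAt_id t s).prodMk hR)
  simp only [add_apply, smul_apply, ContinuousLinearMap.coe_fst', ContinuousLinearMap.coe_snd',
    smul_eq_mul, mul_one] at h
  exact h

/-- Besides ring arithmetic this uses only `X / √X = √X`, true for every real `X`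
(`√X = 0` when `X < 0`). -/
theorem mass_flux_eq_pressure_work (r ρ p e v q : ℝ) :
    -(4 * π * r ^ 2 * (ρ + p) * e * v * √(1 + v ^ 2 / q))
        + 4 * π * r ^ 2 * (ρ + (ρ + p) * v ^ 2 / q) * (e * v / √(1 + v ^ 2 / q))
      = -(4 * π * r ^ 2 * p) * (e * v / √(1 + v ^ 2 / q)) := by
  linear_combination (4 * π * r ^ 2 * (ρ + p) * e * v) * Real.div_sqrt (x := 1 + v ^ 2 / q)

theorem hasDerivWithinAt_mass_along_boundary {m ρ p v φ : ℝ × ℝ → ℝ} {R : ℝ → ℝ}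
    {s : Set ℝ} {t : ℝ}
    (hm : HasFDerivAt m
      ((-(4 * π * R t ^ 2 * (ρ (t, R t) + p (t, R t)) * exp (φ (t, R t)) * v (t, R t)
            * vbar m v (t, R t))) • ContinuousLinearMap.fst ℝ ℝ ℝ
        + (4 * π * R t ^ 2 * (ρ (t, R t) + (ρ (t, R t) + p (t, R t)) * v (t, R t) ^ 2
            / (1 - 2 * m (t, R t) / R t))) • ContinuousLinearMap.snd ℝ ℝ ℝ) (t, R t))
    (hR : HasDerivWithinAt R (exp (φ (t, R t)) * v (t, R t) / vbar m v (t, R t)) s t) :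
    HasDerivWithinAt (fun τ => m (τ, R τ))
      (-(4 * π * R t ^ 2 * p (t, R t)) * (exp (φ (t, R t)) * v (t, R t) / vbar m v (t, R t)))
      s t := by
  have h := hm.hasDerivWithinAt_comp_graph hR
  simp only [vbar] at h ⊢
  rwa [mass_flux_eq_pressure_work] at h

theorem total_mass_conserved_general
    (T : ℝ)
    (R : ℝ → ℝ)
    (U : Set (ℝ × ℝ))
    (hbd : ∀ t ∈ Icc (0 : ℝ) T, (t, R t) ∈ U)
    (m ρ p v φ : ℝ × ℝ → ℝ)
    (hm : ∀ x ∈ U, HasFDerivAt m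
      ((-(4 * π * x.2 ^ 2 * (ρ x + p x) * Real.exp (φ x) * v x * vbar m v x)) •
          (ContinuousLinearMap.fst ℝ ℝ ℝ)
        + (4 * π * x.2 ^ 2 * (ρ x + (ρ x + p x) * (v x) ^ 2 / (1 - 2 * m x / x.2))) •
          (ContinuousLinearMap.snd ℝ ℝ ℝ)) x)
    (hpbd : ∀ t ∈ Icc (0 : ℝ) T, p (t, R t) = 0)
    (hRdot : ∀ t ∈ Icc (0 : ℝ) T,
      HasDerivWithinAt R (Real.exp (φ (t, R t)) * v (t, R t) / vbar m v (t, R t))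
        (Icc 0 T) t) :
    ∀ t ∈ Icc (0 : ℝ) T, m (t, R t) = m (0, R 0) := by
  refine eq_left_of_hasDerivWithinAt_Icc_zero fun t ht => ?_
  have hM := hasDerivWithinAt_mass_along_boundary (hm (t, R t) (hbd t ht)) (hRdot t ht)
  rwa [hpbd t ht, mul_zero, neg_zero, zero_mul] at hM

/-- Proposition (conservation of total mass): for a spherically symmetric relativistic
ball of matter, with the Einstein equations for the Hawking mass `m` holding on an open
set `U` containing the boundary curve, the radial pressure vanishing on the boundary and
the boundary moving with the matter, the total mass `𝓜(t) = m(t, ℛ(t))` is constant. -/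
theorem total_mass_conserved
    (T : ℝ) (hT : 0 < T)
    (R : ℝ → ℝ) (hRpos : ∀ t ∈ Icc (0 : ℝ) T, 0 < R t)
    (hRC1 : ContDiffOn ℝ 1 R (Icc 0 T))
    (U : Set (ℝ × ℝ)) (hU : IsOpen U)
    (hbd : ∀ t ∈ Icc (0 : ℝ) T, (t, R t) ∈ U)
    (m ρ p v φ : ℝ × ℝ → ℝ)
    (hmC1 : ContDiffOn ℝ 1 m U)
    (hpos : ∀ x ∈ U, 0 < 1 - 2 * m x / x.2)
    (hm : ∀ x ∈ U, HasFDerivAt m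
      ((-(4 * π * x.2 ^ 2 * (ρ x + p x) * Real.exp (φ x) * v x * vbar m v x)) •
          (ContinuousLinearMap.fst ℝ ℝ ℝ)
        + (4 * π * x.2 ^ 2 * (ρ x + (ρ x + p x) * (v x) ^ 2 / (1 - 2 * m x / x.2))) •
          (ContinuousLinearMap.snd ℝ ℝ ℝ)) x)
    (hpbd : ∀ t ∈ Icc (0 : ℝ) T, p (t, R t) = 0)
    (hRdot : ∀ t ∈ Icc (0 : ℝ) T,
      HasDerivWithinAt R (Real.exp (φ (t, R t)) * v (t, R t) / vbar m v (t, R t))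
        (Icc 0 T) t) :
    ∀ t ∈ Icc (0 : ℝ) T, m (t, R t) = m (0, R 0) :=
  total_mass_conserved_general T R U hbd m ρ p v φ hm hpbd hRdot
end

section
/- Let κ ∈ ℝ with κ ≠ 1 and ϱ₀ > 0, and let c, s : (0,∞)² → ℝ be positively homogeneous of degree κ, i.e. c(Aδ, Aη) = A^κ c(δ,η) and s(Aδ, Aη) = A^κ s(δ,η) for all A > 0 and all (δ,η) ∈ (0,∞)². Suppose δ, η : (0,∞) → (0,∞) are differentiable and satisfy, for all r > 0, the static Newtonian elastic equations: c(δ(r),η(r))·δ'(r) = (3/r)·s(δ(r),η(r))·(η(r) − δ(r)) − (4πϱ₀/3)·η(r)·δ(r)·r and η'(r) = −(3/r)(η(r) − δ(r)). Then for every A > 0 the rescaled functions δ_A(r) := A^{2/(1−κ)}δ(Ar) and η_A(r) := A^{2/(1−κ)}η(Ar) satisfy the same two equations for all r > 0. -/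
open Real Set

/-! With `B = A^{2/(1-κ)}` one has `A² B^κ = B`. Under `δ ↦ B δ(A ·)` the left-hand side of the
equation for `δ'` picks up the factor `B^κ · B · A` (homogeneity of `c`, chain rule), the shear
term `(3/r) s (η - δ)` the same factor, and the gravity term `η δ r` the factor `B² A⁻¹`; these
agree exactly because `A² B^κ = B`. The equation for `η'` is invariant under any such rescaling. -/

theorem sq_mul_rpow_two_div_one_sub_rpow {A κ : ℝ} (hA : 0 < A) (hκ : κ ≠ 1) :
    A ^ 2 * (A ^ (2 / (1 - κ))) ^ κ = A ^ (2 / (1 - κ)) := by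
  have h1κ : 1 - κ ≠ 0 := sub_ne_zero.mpr hκ.symm
  rw [← rpow_mul hA.le, ← rpow_natCast, ← rpow_add hA]
  congr 1
  field_simp
  ring

theorem HasDerivAt.const_mul_comp_mul {f : ℝ → ℝ} {f' A B r : ℝ}
    (hf : HasDerivAt f f' (A * r)) :
    HasDerivAt (fun r' => B * f (A * r')) (B * (A * f')) r := by
  have hlin : HasDerivAt (fun r' => A * r') A r := by
    simpa using (hasDerivAt_id r).const_mul A
  simpa [mul_comm A f'] using (hf.comp r hlin).const_mul B

theorem HasDerivAt.rescale_mass_eq {δ η : ℝ → ℝ} {A B r : ℝ} (hA : A ≠ 0) (hr : r ≠ 0)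
    (h : HasDerivAt η (-(3 / (A * r)) * (η (A * r) - δ (A * r))) (A * r)) :
    HasDerivAt (fun r' => B * η (A * r')) (-(3 / r) * (B * η (A * r) - B * δ (A * r))) r := by
  refine h.const_mul_comp_mul.congr_deriv ?_
  field_simp

theorem rescale_balance_eq {c s : ℝ × ℝ → ℝ} {κ A B x y d k r : ℝ} (hA : A ≠ 0) (hr : r ≠ 0)
    (hAB : A ^ 2 * B ^ κ = B)
    (hc : c (B * x, B * y) = B ^ κ * c (x, y)) (hs : s (B * x, B * y) = B ^ κ * s (x, y))
    (h : c (x, y) * d = 3 / (A * r) * s (x, y) * (y - x) - k * y * x * (A * r)) :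
    c (B * x, B * y) * (B * (A * d))
      = 3 / r * s (B * x, B * y) * (B * y - B * x) - k * (B * y) * (B * x) * r := by
  have hA' : A * (c (x, y) * d) = 3 / r * s (x, y) * (y - x) - k * y * x * (A ^ 2 * r) := by
    rw [h]
    field_simp
  rw [hc, hs]
  linear_combination (B ^ κ * B) * hA' - (k * B * y * x * r) * hAB

theorem elastic_newtonian_homology_general
    (κ ϱ₀ : ℝ) (hκ : κ ≠ 1)
    (c s : ℝ × ℝ → ℝ)
    (hc : ∀ A > (0 : ℝ), ∀ x : ℝ × ℝ, 0 < x.1 → 0 < x.2 →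
      c (A * x.1, A * x.2) = A ^ κ * c x)
    (hs : ∀ A > (0 : ℝ), ∀ x : ℝ × ℝ, 0 < x.1 → 0 < x.2 →
      s (A * x.1, A * x.2) = A ^ κ * s x)
    (δ η : ℝ → ℝ)
    (hδpos : ∀ r > (0 : ℝ), 0 < δ r) (hηpos : ∀ r > (0 : ℝ), 0 < η r)
    (hδdiff : ∀ r > (0 : ℝ), DifferentiableAt ℝ δ r)
    (hδeq : ∀ r > (0 : ℝ), c (δ r, η r) * deriv δ r
      = (3 / r) * s (δ r, η r) * (η r - δ r) - (4 * π * ϱ₀ / 3) * η r * δ r * r)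
    (hηd : ∀ r > (0 : ℝ), HasDerivAt η (-(3 / r) * (η r - δ r)) r) :
    ∀ A > (0 : ℝ),
      (∀ r > (0 : ℝ),
        DifferentiableAt ℝ (fun r' => A ^ (2 / (1 - κ)) * δ (A * r')) r) ∧
      (∀ r > (0 : ℝ),
        c (A ^ (2 / (1 - κ)) * δ (A * r), A ^ (2 / (1 - κ)) * η (A * r)) *
            deriv (fun r' => A ^ (2 / (1 - κ)) * δ (A * r')) r
          = (3 / r) * s (A ^ (2 / (1 - κ)) * δ (A * r), A ^ (2 / (1 - κ)) * η (A * r)) *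
              (A ^ (2 / (1 - κ)) * η (A * r) - A ^ (2 / (1 - κ)) * δ (A * r))
            - (4 * π * ϱ₀ / 3) * (A ^ (2 / (1 - κ)) * η (A * r)) *
              (A ^ (2 / (1 - κ)) * δ (A * r)) * r) ∧
      (∀ r > (0 : ℝ),
        HasDerivAt (fun r' => A ^ (2 / (1 - κ)) * η (A * r'))
          (-(3 / r) * (A ^ (2 / (1 - κ)) * η (A * r) - A ^ (2 / (1 - κ)) * δ (A * r))) r) := by
  intro A hA
  have hAB := sq_mul_rpow_two_div_one_sub_rpow hA hκ
  set B := A ^ (2 / (1 - κ))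
  have hB : 0 < B := rpow_pos_of_pos hA _
  have hδd : ∀ r > (0 : ℝ), HasDerivAt (fun r' => B * δ (A * r'))
      (B * (A * deriv δ (A * r))) r := fun r hr =>
    (hδdiff _ (mul_pos hA hr)).hasDerivAt.const_mul_comp_mul
  refine ⟨fun r hr => (hδd r hr).differentiableAt, fun r hr => ?_, fun r hr => ?_⟩
  · have hAr := mul_pos hA hr
    rw [(hδd r hr).deriv]
    exact rescale_balance_eq hA.ne' hr.ne' hAB
      (hc B hB (δ (A * r), η (A * r)) (hδpos _ hAr) (hηpos _ hAr))
      (hs B hB (δ (A * r), η (A * r)) (hδpos _ hAr) (hηpos _ hAr)) (hδeq _ hAr)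
  · exact (hηd _ (mul_pos hA hr)).rescale_mass_eq hA.ne' hr.ne'

/-- Proposition (homology theorem for static Newtonian elastic balls): if the squared
longitudinal wave speed `c` and the shear function `s` are positively homogeneous of
degree `κ ≠ 1`, and `(δ, η)` solves the static Newtonian elastic equations, then for
every `A > 0` the rescaled profiles `δ_A(r) = A^{2/(1−κ)}δ(Ar)`,
`η_A(r) = A^{2/(1−κ)}η(Ar)` solve the same equations. -/
theorem elastic_newtonian_homology
    (κ ϱ₀ : ℝ) (hκ : κ ≠ 1) (hϱ₀ : 0 < ϱ₀)
    (c s : ℝ × ℝ → ℝ)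
    (hc : ∀ A > (0 : ℝ), ∀ x : ℝ × ℝ, 0 < x.1 → 0 < x.2 →
      c (A * x.1, A * x.2) = A ^ κ * c x)
    (hs : ∀ A > (0 : ℝ), ∀ x : ℝ × ℝ, 0 < x.1 → 0 < x.2 →
      s (A * x.1, A * x.2) = A ^ κ * s x)
    (δ η : ℝ → ℝ)
    (hδpos : ∀ r > (0 : ℝ), 0 < δ r) (hηpos : ∀ r > (0 : ℝ), 0 < η r)
    (hδdiff : ∀ r > (0 : ℝ), DifferentiableAt ℝ δ r)
    (hδeq : ∀ r > (0 : ℝ), c (δ r, η r) * deriv δ r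
      = (3 / r) * s (δ r, η r) * (η r - δ r) - (4 * π * ϱ₀ / 3) * η r * δ r * r)
    (hηd : ∀ r > (0 : ℝ), HasDerivAt η (-(3 / r) * (η r - δ r)) r) :
    ∀ A > (0 : ℝ),
      (∀ r > (0 : ℝ),
        DifferentiableAt ℝ (fun r' => A ^ (2 / (1 - κ)) * δ (A * r')) r) ∧
      (∀ r > (0 : ℝ),
        c (A ^ (2 / (1 - κ)) * δ (A * r), A ^ (2 / (1 - κ)) * η (A * r)) *
            deriv (fun r' => A ^ (2 / (1 - κ)) * δ (A * r')) r
          = (3 / r) * s (A ^ (2 / (1 - κ)) * δ (A * r), A ^ (2 / (1 - κ)) * η (A * r)) *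
              (A ^ (2 / (1 - κ)) * η (A * r) - A ^ (2 / (1 - κ)) * δ (A * r))
            - (4 * π * ϱ₀ / 3) * (A ^ (2 / (1 - κ)) * η (A * r)) *
              (A ^ (2 / (1 - κ)) * δ (A * r)) * r) ∧
      (∀ r > (0 : ℝ),
        HasDerivAt (fun r' => A ^ (2 / (1 - κ)) * η (A * r'))
          (-(3 / r) * (A ^ (2 / (1 - κ)) * η (A * r) - A ^ (2 / (1 - κ)) * δ (A * r))) r) :=
  elastic_newtonian_homology_general κ ϱ₀ hκ c s hc hs δ η hδpos hηpos hδdiff hδeq hηd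
end

section
/- Let ϱ₀ > 0 and m ≥ 2 an integer. For each j ∈ {1,…,m} let n_j ≥ 1 be an integer, let θ₁ < θ₂ < … < θ_m be real numbers, let β_{1j} < β_{2j} < … < β_{n_j j} be real numbers, and let α_{ij} ≠ 0 (i = 1,…,n_j) be real coefficients, such that: (a) if n_j = 1 then θ_j = β_{1j} and θ_j ≠ 0; (b) at least one exponent β_{ij} is different from 0 and −1; (c) Σ_{i=1}^{n_j} α_{ij}(θ_j − β_{ij}) = 0 for every j. Set I_j = {i : β_{ij} ≠ 0 and β_{ij} ≠ −1}, and define for δ, η > 0 with δ ≠ η: c(δ,η) = ϱ₀^{−1} Σ_{j=1}^{m} η^{θ_j} Σ_{i=1}^{n_j} α_{ij}β_{ij}(1 + β_{ij})(δ/η)^{β_{ij}} and s(δ,η) = ϱ₀^{−1} Σ_{j=1}^{m} η^{θ_j} Σ_{i=1}^{n_j} α_{ij}(θ_j − β_{ij})[−(1 − (δ/η)^{1+β_{ij}})/(1 − δ/η) + β_{ij}(δ/η)^{1+β_{ij}}]. Then there exists κ ∈ ℝ such that c and s are positively homogeneous of degree κ (c(Aδ,Aη) = A^κc(δ,η) and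 s(Aδ,Aη) = A^κs(δ,η) for all A > 0 and all admissible (δ,η)) if and only if there is exactly one index p ∈ {1,…,m} with I_p ≠ ∅; and in that case κ = θ_p. -/
open Real Set Filter Topology

/-- The squared radial longitudinal wave speed of a power-law elastic material:
`c_L²(δ,η) = ϱ₀⁻¹ ∑_j η^{θ_j} ∑_i α_{ij}β_{ij}(1+β_{ij})(δ/η)^{β_{ij}}`. -/
noncomputable def cFun (ϱ₀ : ℝ) (m : ℕ) (n : Fin m → ℕ) (θ : Fin m → ℝ)
    (β α : (j : Fin m) → Fin (n j) → ℝ) (δ η : ℝ) : ℝ :=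
  ϱ₀⁻¹ * ∑ j, η ^ (θ j) * ∑ i, α j i * β j i * (1 + β j i) * (δ / η) ^ (β j i)

/-- The shear function of a power-law elastic material:
`s(δ,η) = ϱ₀⁻¹ ∑_j η^{θ_j} ∑_i α_{ij}(θ_j−β_{ij})[−(1−(δ/η)^{1+β_{ij}})/(1−δ/η)
  + β_{ij}(δ/η)^{1+β_{ij}}]`. -/
noncomputable def sFun (ϱ₀ : ℝ) (m : ℕ) (n : Fin m → ℕ) (θ : Fin m → ℝ)
    (β α : (j : Fin m) → Fin (n j) → ℝ) (δ η : ℝ) : ℝ :=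
  ϱ₀⁻¹ * ∑ j, η ^ (θ j) * ∑ i, α j i * (θ j - β j i) *
    (-((1 - (δ / η) ^ (1 + β j i)) / (1 - δ / η)) + β j i * (δ / η) ^ (1 + β j i))

/-- `c` and `s` are positively homogeneous of degree `κ` on the admissible region
`{δ > 0, η > 0, δ ≠ η}`. -/
def IsHomogOfDeg (c s : ℝ → ℝ → ℝ) (κ : ℝ) : Prop :=
  ∀ A > (0 : ℝ), ∀ δ > (0 : ℝ), ∀ η > (0 : ℝ), δ ≠ η →
    c (A * δ) (A * η) = A ^ κ * c δ η ∧ s (A * δ) (A * η) = A ^ κ * s δ η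

lemma dirichlet_zero {ι : Type*} [DecidableEq ι] (s : Finset ι) (γ c : ι → ℝ)
    (hinj : Set.InjOn γ s)
    (h : ∀ x ∈ Set.Ioo (0:ℝ) 1, ∑ j ∈ s, c j * x ^ (γ j) = 0) :
    ∀ j ∈ s, c j = 0 := by
  induction s using Finset.strongInductionOn with
  | _ s ih =>
    rcases s.eq_empty_or_nonempty with rfl | hs
    · simp
    obtain ⟨j₀, hj₀, hmin⟩ := Finset.exists_min_image s γ hs
    -- the limit of the rescaled sum is c j₀
    have hlim : Tendsto (fun x : ℝ => ∑ j ∈ s, c j * x ^ (γ j - γ j₀)) (𝓝[>] 0)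
        (𝓝 (∑ j ∈ s, if j = j₀ then c j₀ else 0)) := by
      apply tendsto_finset_sum
      intro j hj
      by_cases hjj : j = j₀
      · subst hjj
        simp only [if_pos rfl, sub_self]
        have : (fun x : ℝ => c j * x ^ (0:ℝ)) =ᶠ[𝓝[>] (0:ℝ)] fun _ => c j := by
          filter_upwards [self_mem_nhdsWithin] with x hx
          rw [Real.rpow_zero, mul_one]
        exact Tendsto.congr' this.symm tendsto_const_nhds
      · have hpos : 0 < γ j - γ j₀ := by
          have hle := hmin j hj
          have hne : γ j ≠ γ j₀ := fun hE => hjj (hinj hj hj₀ hE)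
          cases lt_or_eq_of_le hle with
          | inl h' => linarith
          | inr h' => exact absurd h'.symm hne
        simp only [if_neg hjj]
        have h0 : Tendsto (fun x : ℝ => x ^ (γ j - γ j₀)) (𝓝[>] 0) (𝓝 0) := by
          have := (Real.continuousAt_rpow_const 0 (γ j - γ j₀) (Or.inr hpos.le)).tendsto
          rw [Real.zero_rpow hpos.ne'] at this
          exact this.mono_left nhdsWithin_le_nhds
        simpa using h0.const_mul (c j)
    have hzero : (fun x : ℝ => ∑ j ∈ s, c j * x ^ (γ j - γ j₀)) =ᶠ[𝓝[>] (0:ℝ)]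
        fun _ => 0 := by
      filter_upwards [Ioo_mem_nhdsGT_of_mem (by simp : (0:ℝ) ∈ Ico (0:ℝ) 1)] with x hx
      have hx0 : (0:ℝ) < x := hx.1
      have : ∑ j ∈ s, c j * x ^ (γ j - γ j₀) = (∑ j ∈ s, c j * x ^ (γ j)) / x ^ (γ j₀) := by
        rw [Finset.sum_div]
        refine Finset.sum_congr rfl fun j hj => ?_
        rw [Real.rpow_sub hx0, mul_div_assoc]
      rw [this, h x hx, zero_div]
    have hcj₀ : c j₀ = 0 := by
      have h1 := tendsto_nhds_unique (hlim.congr' hzero) tendsto_const_nhds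
      rw [Finset.sum_ite_eq' s j₀ (fun _ => c j₀)] at h1
      simpa [hj₀] using h1
    intro j hj
    by_cases hjj : j = j₀
    · subst hjj; exact hcj₀
    · refine ih (s.erase j₀) (Finset.erase_ssubset hj₀) (hinj.mono ?_) ?_ j
        (Finset.mem_erase.2 ⟨hjj, hj⟩)
      · intro x hx; exact (Finset.mem_erase.1 hx).2
      · intro x hx
        have := h x hx
        rwa [← Finset.add_sum_erase s _ hj₀, hcj₀, zero_mul, zero_add] at this

lemma dirichlet_ne_zero {ι : Type*} [DecidableEq ι] (s : Finset ι) (hs : s.Nonempty)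
    (γ c : ι → ℝ) (hinj : Set.InjOn γ s) (hcne : ∀ j ∈ s, c j ≠ 0) :
    ∃ x ∈ Set.Ioo (0:ℝ) 1, ∑ j ∈ s, c j * x ^ (γ j) ≠ 0 := by
  by_contra hco
  push_neg at hco
  obtain ⟨j, hj⟩ := hs
  exact hcne j hj (dirichlet_zero s γ c hinj hco j hj)

lemma claim1
    (ϱ₀ : ℝ) (hϱ₀ : 0 < ϱ₀)
    (m : ℕ)
    (n : Fin m → ℕ)
    (θ : Fin m → ℝ) (hθ : StrictMono θ)
    (β α : (j : Fin m) → Fin (n j) → ℝ)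
    (hβ : ∀ j, StrictMono (β j))
    (hα : ∀ j i, α j i ≠ 0)
    (κ : ℝ)
    (hk : ∀ A > (0 : ℝ), ∀ δ > (0 : ℝ), ∀ η > (0 : ℝ), δ ≠ η →
      cFun ϱ₀ m n θ β α (A * δ) (A * η) = A ^ κ * cFun ϱ₀ m n θ β α δ η)
    (p : Fin m) (hp : ∃ i, β p i ≠ 0 ∧ β p i ≠ -1) : κ = θ p := by
  classical
  set C : Fin m → ℝ → ℝ :=
    fun j t => ∑ i, α j i * β j i * (1 + β j i) * t ^ (β j i) with hC
  -- Step 1 : for all A > 0 and t ∈ (0,1), (A^(θ j) - A^κ) * C j t = 0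
  have step1 : ∀ A > (0:ℝ), ∀ t ∈ Set.Ioo (0:ℝ) 1, ∀ j : Fin m,
      (A ^ (θ j) - A ^ κ) * C j t = 0 := by
    intro A hA t ht j
    have key : ∀ x ∈ Set.Ioo (0:ℝ) 1,
        ∑ j, ((A ^ (θ j) - A ^ κ) * C j t) * x ^ (θ j) = 0 := by
      intro η hη
      have hη0 : (0:ℝ) < η := hη.1
      have hδ0 : (0:ℝ) < t * η := mul_pos ht.1 hη0
      have hne : t * η ≠ η := by
        intro hE
        have ht1 : t = 1 := mul_right_cancel₀ hη0.ne' (hE.trans (one_mul η).symm)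
        exact ht.2.ne ht1
      have EQ := hk A hA (t * η) hδ0 η hη0 hne
      simp only [cFun, mul_div_mul_left _ _ hA.ne', mul_div_assoc,
        div_self hη0.ne', mul_one] at EQ
      -- EQ : ϱ₀⁻¹ * ∑ j, (A*η)^(θ j) * C j t = A^κ * (ϱ₀⁻¹ * ∑ j, η^(θ j) * C j t)
      have EQ2 : ∑ j, (A * η) ^ (θ j) * C j t
          = A ^ κ * ∑ j, η ^ (θ j) * C j t := by
        have h' : ϱ₀⁻¹ * (∑ j, (A * η) ^ (θ j) * C j t)
            = ϱ₀⁻¹ * (A ^ κ * ∑ j, η ^ (θ j) * C j t) := by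
          rw [EQ]; ring
        exact mul_left_cancel₀ (inv_ne_zero hϱ₀.ne') h'
      calc ∑ j, ((A ^ (θ j) - A ^ κ) * C j t) * η ^ (θ j)
          = ∑ j, ((A * η) ^ (θ j) * C j t - A ^ κ * (η ^ (θ j) * C j t)) := by
            refine Finset.sum_congr rfl fun j _ => ?_
            rw [Real.mul_rpow hA.le hη0.le]; ring
        _ = ∑ j, (A * η) ^ (θ j) * C j t - A ^ κ * ∑ j, η ^ (θ j) * C j t := by
            rw [Finset.sum_sub_distrib, Finset.mul_sum]
        _ = 0 := by rw [EQ2]; ring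
    exact dirichlet_zero Finset.univ θ (fun j => (A ^ (θ j) - A ^ κ) * C j t)
      (hθ.injective.injOn) key j (Finset.mem_univ j)
  -- Step 2 : find t₀ with C p t₀ ≠ 0
  obtain ⟨i₀, hi₀⟩ := hp
  set F : Finset (Fin (n p)) := Finset.univ.filter (fun i => β p i ≠ 0 ∧ β p i ≠ -1)
    with hF
  have hFne : F.Nonempty := ⟨i₀, by simp [hF, hi₀.1, hi₀.2]⟩
  obtain ⟨t₀, ht₀, hCne⟩ := dirichlet_ne_zero F hFne (β p)
    (fun i => α p i * β p i * (1 + β p i)) ((hβ p).injective.injOn)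
    (by
      intro i hi
      rw [hF, Finset.mem_filter] at hi
      have h1 : (1:ℝ) + β p i ≠ 0 := by
        intro hE; exact hi.2.2 (by linarith)
      exact mul_ne_zero (mul_ne_zero (hα p i) hi.2.1) h1)
  have hCp : C p t₀ ≠ 0 := by
    have : C p t₀ = ∑ i ∈ F, α p i * β p i * (1 + β p i) * t₀ ^ (β p i) := by
      rw [hC, hF]
      refine (Finset.sum_filter_of_ne ?_).symm
      intro i _ hne
      by_contra hcon
      push_neg at hcon
      rcases ne_or_eq (β p i) 0 with h0 | h0
      · have hm1 : β p i = -1 := hcon h0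
        rw [hm1] at hne
        apply hne; ring
      · rw [h0] at hne
        apply hne; ring
    rw [this]
    exact hCne
  -- Step 3 : conclude
  have h2 := step1 2 (by norm_num) t₀ ht₀ p
  have h3 : (2:ℝ) ^ (θ p) = (2:ℝ) ^ κ := by
    rcases mul_eq_zero.1 h2 with h | h
    · exact sub_eq_zero.1 h
    · exact absurd h hCp
  have h4 := congrArg Real.log h3
  rw [Real.log_rpow (by norm_num), Real.log_rpow (by norm_num)] at h4
  have hlog : Real.log 2 ≠ 0 := (Real.log_pos (by norm_num)).ne'
  exact (mul_right_cancel₀ hlog h4).symm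

/-- Proposition: for a power-law deformation potential of type `(n₁,…,n_m)`, the wave
speed `c_L²` and shear function `s` are homogeneous of some degree `κ` if and only if
there is exactly one index `p` with `I_p = {i : β_{ip} ∉ {0,−1}}` nonempty; in that case
`κ = θ_p`. -/
theorem powerlaw_homogeneity
    (ϱ₀ : ℝ) (hϱ₀ : 0 < ϱ₀)
    (m : ℕ) (hm : 2 ≤ m)
    (n : Fin m → ℕ) (hn : ∀ j, 1 ≤ n j)
    (θ : Fin m → ℝ) (hθ : StrictMono θ)
    (β α : (j : Fin m) → Fin (n j) → ℝ)
    (hβ : ∀ j, StrictMono (β j))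
    (hα : ∀ j i, α j i ≠ 0)
    (ha : ∀ j, n j = 1 → θ j ≠ 0 ∧ ∀ i, β j i = θ j)
    (hb : ∃ j, ∃ i, β j i ≠ 0 ∧ β j i ≠ -1)
    (hc : ∀ j, ∑ i, α j i * (θ j - β j i) = 0) :
    ((∃ κ : ℝ, IsHomogOfDeg (cFun ϱ₀ m n θ β α) (sFun ϱ₀ m n θ β α) κ) ↔
      (∃! p : Fin m, ∃ i, β p i ≠ 0 ∧ β p i ≠ -1)) ∧
    (∀ κ : ℝ, IsHomogOfDeg (cFun ϱ₀ m n θ β α) (sFun ϱ₀ m n θ β α) κ →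
      ∀ p : Fin m, (∃ i, β p i ≠ 0 ∧ β p i ≠ -1) → κ = θ p) := by
  classical
  have main2 : ∀ κ : ℝ, IsHomogOfDeg (cFun ϱ₀ m n θ β α) (sFun ϱ₀ m n θ β α) κ →
      ∀ p : Fin m, (∃ i, β p i ≠ 0 ∧ β p i ≠ -1) → κ = θ p := by
    intro κ hk p hp
    exact claim1 ϱ₀ hϱ₀ m n θ hθ β α hβ hα κ
      (fun A hA δ hδ η hη hne => (hk A hA δ hδ η hη hne).1) p hp
  refine ⟨⟨?_, ?_⟩, main2⟩
  · rintro ⟨κ, hk⟩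
    obtain ⟨j, hj⟩ := hb
    refine ⟨j, hj, fun q hq => ?_⟩
    exact hθ.injective ((main2 κ hk q hq).symm.trans (main2 κ hk j hj))
  · rintro ⟨p, hp, hup⟩
    refine ⟨θ p, ?_⟩
    intro A hA δ hδ η hη hne
    set t := δ / η with htdef
    have ht0 : 0 < t := div_pos hδ hη
    have ht1 : t ≠ 1 := by
      intro hE
      rw [htdef, div_eq_iff hη.ne', one_mul] at hE
      exact hne hE
    have h1t : (1:ℝ) - t ≠ 0 := sub_ne_zero.2 (Ne.symm ht1)
    have hratio : (A * δ) / (A * η) = t := by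
      rw [htdef]; exact mul_div_mul_left _ _ hA.ne'
    have hmulr : (A * η) ^ (θ p) = A ^ (θ p) * η ^ (θ p) := Real.mul_rpow hA.le hη.le
    have hIempty : ∀ j : Fin m, j ≠ p → ∀ i, β j i = 0 ∨ β j i = -1 := by
      intro j hjp i
      by_contra hcon
      push_neg at hcon
      exact hjp (hup j ⟨i, hcon⟩)
    have Cj0 : ∀ j : Fin m, j ≠ p →
        ∑ i, α j i * β j i * (1 + β j i) * t ^ (β j i) = 0 := by
      intro j hjp
      refine Finset.sum_eq_zero fun i _ => ?_
      rcases hIempty j hjp i with h | h <;> rw [h] <;> ring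
    have Sj0 : ∀ j : Fin m, j ≠ p →
        ∑ i, α j i * (θ j - β j i) *
          (-((1 - t ^ (1 + β j i)) / (1 - t)) + β j i * t ^ (1 + β j i)) = 0 := by
      intro j hjp
      have hterm : ∀ i : Fin (n j), α j i * (θ j - β j i) *
          (-((1 - t ^ (1 + β j i)) / (1 - t)) + β j i * t ^ (1 + β j i))
          = α j i * (θ j - β j i) * (-1) := by
        intro i
        rcases hIempty j hjp i with h | h
        · rw [h, add_zero, Real.rpow_one, div_self h1t]; ring
        · rw [h, add_neg_cancel, Real.rpow_zero]
          rw [sub_self, zero_div]; ring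
      rw [Finset.sum_congr rfl (fun i _ => hterm i), ← Finset.sum_mul, hc j, zero_mul]
    constructor
    · simp only [cFun, hratio, ← htdef]
      rw [Finset.sum_eq_single_of_mem p (Finset.mem_univ p)
            (fun j _ hjp => by rw [Cj0 j hjp, mul_zero]),
          Finset.sum_eq_single_of_mem p (Finset.mem_univ p)
            (fun j _ hjp => by rw [Cj0 j hjp, mul_zero]),
          hmulr]
      ring
    · simp only [sFun, hratio, ← htdef]
      rw [Finset.sum_eq_single_of_mem p (Finset.mem_univ p)
            (fun j _ hjp => by rw [Sj0 j hjp, mul_zero]),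
          Finset.sum_eq_single_of_mem p (Finset.mem_univ p)
            (fun j _ hjp => by rw [Sj0 j hjp, mul_zero]),
          hmulr]
      ring
end

section
/- Let Λ > 0, a₀ > 0 and a₁ > √(2Λ/(3a₀)). Then: (a) there exists a twice continuously differentiable function a : [0,∞) → (0,∞) with a(0) = a₀, a'(0) = a₁ and a(t)²a''(t) = −Λ/3 for all t ≥ 0; and (b) every twice differentiable a : [0,∞) → (0,∞) with a(0) = a₀, a'(0) = a₁ and a(t)²a''(t) = −Λ/3 for all t ≥ 0 satisfies lim_{t→∞} a(t)/t = (a₁² − 2Λ/(3a₀))^{1/2} > 0; in particular a(t) ∼ c₁(1 + c₂t) as t → ∞ for some positive constants c₁, c₂. -/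
/-!
Write the equation as `a² a'' = c` with `c = -Λ/3 ≤ 0`. Multiplying by `2a'/a²` shows that
`a'² + 2c/a` is conserved; its value `E = a₁² - 2Λ/(3a₀)` is positive exactly when `a₁` is
supercritical. Since `a'² ≥ E > 0`, the velocity never vanishes, so `a' ≥ √E`, `a → ∞`, and then
`a'² = E - 2c/a → E`; a function whose derivative tends to `√E` grows like `√E t`.

Existence reduces to the autonomous first-order equation `a' = √(E - 2c/a)`, solved by
separation of variables; differentiating it gives back `a² a'' = c`.
-/

open Real Set Filter Topology Asymptotics

theorem exists_forall_hasDerivAt_comp_of_pos_of_le {v : ℝ → ℝ} {M : ℝ} (hv : Continuous v)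
    (hpos : ∀ x, 0 < v x) (hle : ∀ x, v x ≤ M) (x₀ : ℝ) :
    ∃ x : ℝ → ℝ, x 0 = x₀ ∧ ∀ t, HasDerivAt x (v (x t)) t := by
  have hM : 0 < M⁻¹ := inv_pos.2 ((hpos 0).trans_le (hle 0))
  have hv_inv : Continuous fun s => (v s)⁻¹ := hv.inv₀ fun s => (hpos s).ne'
  -- The solution is the inverse of `F`, a bijection of `ℝ` since `F' = 1/v ≥ 1/M`.
  set F : ℝ → ℝ := fun y => ∫ s in x₀..y, (v s)⁻¹
  have hF : ∀ y, HasDerivAt F (v y)⁻¹ y := fun y =>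
    intervalIntegral.integral_hasDerivAt_right (hv_inv.intervalIntegrable _ _)
      (hv_inv.stronglyMeasurableAtFilter _ _) hv_inv.continuousAt
  have hF_diff : Differentiable ℝ F := fun y => (hF y).differentiableAt
  have hF_grow : ∀ ⦃y z⦄, y ≤ z → M⁻¹ * (z - y) ≤ F z - F y :=
    mul_sub_le_image_sub_of_le_deriv hF_diff fun y => (hF y).deriv ▸ inv_anti₀ (hpos y) (hle y)
  have hF_top : Tendsto F atTop atTop := by
    refine tendsto_atTop_mono' _ ?_
      (tendsto_atTop_add_const_right _ (F 0) (tendsto_id.const_mul_atTop hM))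
    filter_upwards [eventually_ge_atTop 0] with z hz
    simp only [id]
    linarith [hF_grow hz]
  have hF_bot : Tendsto F atBot atBot := by
    refine tendsto_atBot_mono' _ ?_
      (tendsto_atBot_add_const_right _ (F 0) (tendsto_id.const_mul_atBot hM))
    filter_upwards [eventually_le_atBot 0] with y hy
    simp only [id]
    linarith [hF_grow hy]
  let Φ := StrictMono.orderIsoOfSurjective F
    (strictMono_of_hasDerivAt_pos hF fun y => inv_pos.2 (hpos y))
    (hF_diff.continuous.surjective hF_top hF_bot)
  refine ⟨Φ.symm, Φ.symm_apply_eq.2 intervalIntegral.integral_same.symm, fun t => ?_⟩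
  simpa using (hF (Φ.symm t)).of_local_left_inverse Φ.symm.continuous.continuousAt
    (inv_pos.2 (hpos _)).ne' (Eventually.of_forall Φ.apply_symm_apply)

theorem isLittleO_sub_mul_id_of_tendsto_deriv {f f' : ℝ → ℝ} {L : ℝ}
    (hf : ∀ᶠ t in atTop, HasDerivAt f (f' t) t) (hf' : Tendsto f' atTop (𝓝 L)) :
    (fun t => f t - L * t) =o[atTop] id := by
  refine isLittleO_iff.2 fun ε hε => ?_
  obtain ⟨T, hT⟩ := eventually_atTop.1 <| (hf.and (eventually_ge_atTop 0)).and <|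
    hf'.eventually (Metric.closedBall_mem_nhds L (half_pos hε))
  set g := fun t => f t - L * t
  have hg : ∀ t ≥ T, HasDerivAt g (f' t - L) t := fun t ht =>
    (hT t ht).1.1.fun_sub ((hasDerivAt_id t).const_mul L |>.congr_deriv (mul_one L))
  have hg_drift : ∀ t ≥ T, ‖g t - g T‖ ≤ ε / 2 * (t - T) := fun t ht =>
    norm_image_sub_le_of_norm_deriv_right_le_segment
      (fun x hx => (hg x hx.1).continuousAt.continuousWithinAt)
      (fun x hx => (hg x hx.1).hasDerivWithinAt)
      (fun x hx => by simpa [dist_eq_norm] using (hT x hx.1).2) t ⟨ht, le_rfl⟩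
  filter_upwards [eventually_ge_atTop T, eventually_ge_atTop (2 * ‖g T‖ / ε)] with t hTt hgt
  have hT0 : 0 ≤ T := (hT T le_rfl).1.2
  have : ‖g T‖ ≤ ε / 2 * t := by
    rw [div_le_iff₀ hε] at hgt
    linarith
  rw [Real.norm_of_nonneg (hT0.trans hTt : 0 ≤ id t)]
  calc ‖g t‖ ≤ ‖g T‖ + ‖g t - g T‖ := norm_le_norm_add_norm_sub' _ _
    _ ≤ ε / 2 * t + ε / 2 * (t - T) := add_le_add this (hg_drift t hTt)
    _ ≤ ε * id t := by simp only [id]; nlinarith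

theorem tendsto_div_id_of_tendsto_deriv {f f' : ℝ → ℝ} {L : ℝ}
    (hf : ∀ᶠ t in atTop, HasDerivAt f (f' t) t) (hf' : Tendsto f' atTop (𝓝 L)) :
    Tendsto (fun t => f t / t) atTop (𝓝 L) := by
  have := ((isLittleO_sub_mul_id_of_tendsto_deriv hf hf').tendsto_div_nhds_zero).add_const L
  rw [zero_add] at this
  refine this.congr' ?_
  filter_upwards [eventually_ne_atTop 0] with t ht
  simp only [id]
  field_simp
  ring

theorem tendsto_div_mul_one_add {f : ℝ → ℝ} {L : ℝ} (hL : L ≠ 0)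
    (h : Tendsto (fun t => f t / t) atTop (𝓝 L)) :
    Tendsto (fun t => f t / (L * (1 + t))) atTop (𝓝 1) := by
  have hden : Tendsto (fun t : ℝ => L * (t⁻¹ + 1)) atTop (𝓝 L) := by
    simpa using (tendsto_inv_atTop_zero.add_const 1).const_mul L
  refine (div_self hL ▸ h.div hden hL).congr' ?_
  filter_upwards [eventually_gt_atTop 0] with t ht
  simp only [Pi.div_apply]
  field_simp

namespace CollapseODE

def IsPosSolution (c : ℝ) (a a' a'' : ℝ → ℝ) : Prop :=
  ∀ t ∈ Ici (0 : ℝ), 0 < a t ∧ HasDerivWithinAt a (a' t) (Ici 0) t ∧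
    HasDerivWithinAt a' (a'' t) (Ici 0) t ∧ a t ^ 2 * a'' t = c

/-- Twice the paper's conserved energy `a'²/2 - Λ/(3a)`, for `c = -Λ/3`. -/
noncomputable def energy (c : ℝ) (a a' : ℝ → ℝ) (t : ℝ) : ℝ := a' t ^ 2 + 2 * c / a t

variable {c : ℝ}

theorem exists_isPosSolution (hc : c ≤ 0) {a₀ a₁ : ℝ} (ha₀ : 0 < a₀) (ha₁ : 0 ≤ a₁)
    (hE : 0 < a₁ ^ 2 + 2 * c / a₀) :
    ∃ a a' a'' : ℝ → ℝ, a 0 = a₀ ∧ a' 0 = a₁ ∧ ContinuousOn a'' (Ici 0) ∧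
      IsPosSolution c a a' a'' := by
  set E := a₁ ^ 2 + 2 * c / a₀
  have hrad_bounds : ∀ {x}, a₀ ≤ x → E ≤ E - 2 * c / x ∧ E - 2 * c / x ≤ a₁ ^ 2 := fun {x} hx => by
    have h1 : 2 * c / x ≤ 0 := div_nonpos_of_nonpos_of_nonneg (by linarith) (ha₀.le.trans hx)
    have h2 : -(2 * c) / x ≤ -(2 * c) / a₀ := div_le_div_of_nonneg_left (by linarith) ha₀ hx
    rw [neg_div, neg_div] at h2
    constructor <;> linarith
  -- Clamping at `a₀` makes `v` positive and bounded on all of `ℝ`; the solution stays above `a₀`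
  -- for `t ≥ 0`, where the clamp is inactive.
  set v : ℝ → ℝ := fun x => √(E - 2 * c / max x a₀)
  have hv : Continuous v := (continuous_const.sub (continuous_const.div
    (continuous_id.max continuous_const) fun x => (ha₀.trans_le (le_max_right x a₀)).ne')).sqrt
  have hv_pos : ∀ x, 0 < v x := fun x =>
    Real.sqrt_pos.2 (hE.trans_le (hrad_bounds (le_max_right x a₀)).1)
  have hv_le : ∀ x, v x ≤ a₁ := fun x =>
    (Real.sqrt_le_sqrt (hrad_bounds (le_max_right x a₀)).2).trans_eq (Real.sqrt_sq ha₁)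
  obtain ⟨a, ha0, ha⟩ := exists_forall_hasDerivAt_comp_of_pos_of_le hv hv_pos hv_le a₀
  have ha_ge : ∀ t, 0 ≤ t → a₀ ≤ a t := fun t ht =>
    ha0 ▸ (strictMono_of_hasDerivAt_pos ha fun t => hv_pos (a t)).monotone ht
  have ha_pos : ∀ t, 0 ≤ t → 0 < a t := fun t ht => ha₀.trans_le (ha_ge t ht)
  set a' := fun t => √(E - 2 * c / a t)
  have ha' : ∀ t, 0 ≤ t → HasDerivAt a (a' t) t := fun t ht => by
    simpa only [v, max_eq_left (ha_ge t ht)] using ha t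
  have ha'' : ∀ t, 0 ≤ t → HasDerivAt a' (c / a t ^ 2) t := fun t ht => by
    have hrad : 0 < E - 2 * c / a t := hE.trans_le (hrad_bounds (ha_ge t ht)).1
    have ha't : 0 < a' t := Real.sqrt_pos.2 hrad
    refine ((((hasDerivAt_const t (2 * c)).div (ha' t ht) (ha_pos t ht).ne').const_sub
      E).sqrt hrad.ne').congr_deriv ?_
    change _ / (2 * a' t) = _
    field_simp
    ring
  refine ⟨a, a', fun t => c / a t ^ 2, ha0, ?_, ?_, fun t ht =>
    ⟨ha_pos t ht, (ha' t ht).hasDerivWithinAt, (ha'' t ht).hasDerivWithinAt, ?_⟩⟩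
  · simp only [a', ha0, E, add_sub_cancel_right, Real.sqrt_sq ha₁]
  · exact continuousOn_const.div
      ((continuous_iff_continuousAt.2 fun t => (ha t).continuousAt).continuousOn.pow 2)
      fun t ht => pow_ne_zero 2 (ha_pos t ht).ne'
  · field_simp [(ha_pos t ht).ne']

variable {a a' a'' : ℝ → ℝ}

namespace IsPosSolution

theorem continuousOn (h : IsPosSolution c a a' a'') : ContinuousOn a (Ici 0) :=
  fun t ht => (h t ht).2.1.continuousWithinAt

theorem continuousOn_deriv (h : IsPosSolution c a a' a'') : ContinuousOn a' (Ici 0) :=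
  fun t ht => (h t ht).2.2.1.continuousWithinAt

theorem hasDerivAt (h : IsPosSolution c a a' a'') {t : ℝ} (ht : 0 < t) :
    HasDerivAt a (a' t) t :=
  (h t ht.le).2.1.hasDerivAt (Ici_mem_nhds ht)

theorem energy_eq (h : IsPosSolution c a a' a'') {t : ℝ} (ht : 0 ≤ t) :
    energy c a a' t = energy c a a' 0 := by
  have hderiv : ∀ x ∈ Ici (0 : ℝ), HasDerivWithinAt (energy c a a') 0 (Ici 0) x := by
    intro x hx
    obtain ⟨hpos, ha, ha', hode⟩ := h x hx
    show HasDerivWithinAt (fun y => a' y ^ 2 + 2 * c / a y) 0 (Ici 0) x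
    refine ((ha'.pow 2).add ((hasDerivWithinAt_const x _ (2 * c)).div ha hpos.ne')).congr_deriv ?_
    field_simp
    linear_combination 2 * a' x * hode
  exact constant_of_has_deriv_right_zero
    (fun x hx => (hderiv x hx.1).continuousWithinAt.mono Icc_subset_Ici_self)
    (fun x hx => (hderiv x hx.1).mono (Ici_subset_Ici.2 hx.1)) t ⟨ht, le_rfl⟩

theorem deriv_sq_eq (h : IsPosSolution c a a' a'') {t : ℝ} (ht : 0 ≤ t) :
    a' t ^ 2 = energy c a a' 0 - 2 * c / a t := by
  rw [← h.energy_eq ht, energy]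
  ring

theorem deriv_pos (h : IsPosSolution c a a' a'') (hc : c ≤ 0) (hE : 0 < energy c a a' 0)
    (h0 : 0 < a' 0) {t : ℝ} (ht : 0 ≤ t) : 0 < a' t := by
  have hne : ∀ s ∈ Ici (0 : ℝ), a' s ≠ 0 := fun s hs hs0 => by
    have := h.deriv_sq_eq hs
    have : 2 * c / a s ≤ 0 := div_nonpos_of_nonpos_of_nonneg (by linarith) (h s hs).1.le
    nlinarith
  by_contra! hle
  obtain ⟨s, hs, hs0⟩ := isPreconnected_Ici.intermediate_value ht self_mem_Ici
    h.continuousOn_deriv ⟨hle, h0.le⟩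
  exact hne s hs hs0

theorem deriv_eq_sqrt (h : IsPosSolution c a a' a'') (hc : c ≤ 0) (hE : 0 < energy c a a' 0)
    (h0 : 0 < a' 0) {t : ℝ} (ht : 0 ≤ t) : a' t = √(energy c a a' 0 - 2 * c / a t) := by
  rw [← h.deriv_sq_eq ht, Real.sqrt_sq (h.deriv_pos hc hE h0 ht).le]

theorem sqrt_energy_le_deriv (h : IsPosSolution c a a' a'') (hc : c ≤ 0)
    (hE : 0 < energy c a a' 0) (h0 : 0 < a' 0) {t : ℝ} (ht : 0 ≤ t) :
    √(energy c a a' 0) ≤ a' t := by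
  rw [h.deriv_eq_sqrt hc hE h0 ht]
  exact Real.sqrt_le_sqrt ((le_sub_self_iff _).2 (div_nonpos_of_nonpos_of_nonneg (by linarith)
    (h t ht).1.le))

theorem tendsto_atTop (h : IsPosSolution c a a' a'') (hc : c ≤ 0)
    (hE : 0 < energy c a a' 0) (h0 : 0 < a' 0) : Tendsto a atTop atTop := by
  have hgrow := (convex_Ici (0 : ℝ)).mul_sub_le_image_sub_of_le_deriv h.continuousOn
    (fun x hx => (h.hasDerivAt (interior_Ici.subset hx)).differentiableAt.differentiableWithinAt)
    (fun x hx => (h.hasDerivAt (interior_Ici.subset hx)).deriv ▸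
      h.sqrt_energy_le_deriv hc hE h0 (interior_Ici.subset hx).le) 0 self_mem_Ici
  refine tendsto_atTop_mono' _ ?_ (tendsto_atTop_add_const_left _ (a 0)
    (tendsto_id.const_mul_atTop (Real.sqrt_pos.2 hE)))
  filter_upwards [eventually_ge_atTop 0] with t ht
  have := hgrow t ht ht
  simp only [id, sub_zero] at this ⊢
  linarith

theorem tendsto_deriv (h : IsPosSolution c a a' a'') (hc : c ≤ 0)
    (hE : 0 < energy c a a' 0) (h0 : 0 < a' 0) :
    Tendsto a' atTop (𝓝 √(energy c a a' 0)) := by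
  have hlim : Tendsto (fun t => √(energy c a a' 0 - 2 * c / a t)) atTop
      (𝓝 √(energy c a a' 0)) := by
    simpa using ((tendsto_const_nhds.div_atTop (h.tendsto_atTop hc hE h0)).const_sub
      (energy c a a' 0)).sqrt
  refine hlim.congr' ?_
  filter_upwards [eventually_ge_atTop 0] with t ht
  exact (h.deriv_eq_sqrt hc hE h0 ht).symm

theorem tendsto_div_id (h : IsPosSolution c a a' a'') (hc : c ≤ 0)
    (hE : 0 < energy c a a' 0) (h0 : 0 < a' 0) :
    Tendsto (fun t => a t / t) atTop (𝓝 √(energy c a a' 0)) :=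
  tendsto_div_id_of_tendsto_deriv ((eventually_gt_atTop 0).mono fun _ ht => h.hasDerivAt ht)
    (h.tendsto_deriv hc hE h0)

end IsPosSolution

end CollapseODE

open CollapseODE

/-- Proposition (supercritical case of the separable collapse ODE `a²a'' = −Λ/3`):
for `Λ > 0`, `a₀ > 0` and `a₁ > √(2Λ/(3a₀))`, (a) there exists a twice continuously
differentiable positive solution on `[0,∞)` with the given initial data; (b) every
positive twice differentiable solution with this data satisfies
`a(t)/t → √(a₁² − 2Λ/(3a₀)) > 0` as `t → ∞`, so that `a(t) ∼ c₁(1 + c₂t)`. -/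
theorem supercritical_collapse_global
    (Λ a₀ a₁ : ℝ) (hΛ : 0 < Λ) (ha₀ : 0 < a₀)
    (ha₁ : Real.sqrt (2 * Λ / (3 * a₀)) < a₁) :
    (∃ a a' a'' : ℝ → ℝ,
      a 0 = a₀ ∧ a' 0 = a₁ ∧
      ContinuousOn a'' (Ici 0) ∧
      ∀ t ∈ Ici (0 : ℝ),
        0 < a t ∧
        HasDerivWithinAt a (a' t) (Ici 0) t ∧
        HasDerivWithinAt a' (a'' t) (Ici 0) t ∧
        (a t) ^ 2 * a'' t = -Λ / 3) ∧
    (∀ a a' a'' : ℝ → ℝ,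
      a 0 = a₀ → a' 0 = a₁ →
      (∀ t ∈ Ici (0 : ℝ),
        0 < a t ∧
        HasDerivWithinAt a (a' t) (Ici 0) t ∧
        HasDerivWithinAt a' (a'' t) (Ici 0) t ∧
        (a t) ^ 2 * a'' t = -Λ / 3) →
      0 < Real.sqrt (a₁ ^ 2 - 2 * Λ / (3 * a₀)) ∧
      Tendsto (fun t => a t / t) atTop (nhds (Real.sqrt (a₁ ^ 2 - 2 * Λ / (3 * a₀)))) ∧
      ∃ c₁ > (0 : ℝ), ∃ c₂ > (0 : ℝ),
        Tendsto (fun t => a t / (c₁ * (1 + c₂ * t))) atTop (nhds 1)) := by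
  have hc : -Λ / 3 ≤ 0 := by linarith
  have ha₁_pos : 0 < a₁ := (Real.sqrt_nonneg _).trans_lt ha₁
  have hE : a₁ ^ 2 - 2 * Λ / (3 * a₀) = a₁ ^ 2 + 2 * (-Λ / 3) / a₀ := by ring
  have hE_pos : 0 < a₁ ^ 2 + 2 * (-Λ / 3) / a₀ := by
    rw [← hE, sub_pos, ← Real.sqrt_lt' ha₁_pos]
    exact ha₁
  have hL := Real.sqrt_pos.2 hE_pos
  refine ⟨exists_isPosSolution hc ha₀ ha₁_pos.le hE_pos, fun a a' a'' h0 h1 ha => ?_⟩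
  subst h0 h1
  have hlim := IsPosSolution.tendsto_div_id ha hc hE_pos ha₁_pos
  rw [hE]
  exact ⟨hL, hlim, _, hL, 1, one_pos,
    by simpa only [one_mul] using tendsto_div_mul_one_add hL.ne' hlim⟩
end

section
/- Let Λ > 0, a₀ > 0 and a₁ < √(2Λ/(3a₀)). Then there exist T ∈ (0,∞) and a twice continuously differentiable function a : [0,T) → (0,∞) with a(0) = a₀, a'(0) = a₁, a(t)²a''(t) = −Λ/3 for all t ∈ [0,T), such that lim_{t→T⁻} a(t) = 0 and lim_{t→T⁻} a(t)·(T − t)^{−2/3} = (3Λ/2)^{1/3}. In particular the solution collapses to zero in finite time, with a(t) comparable to a constant multiple of (T − t)^{2/3} as t → T⁻. -/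
/-!
Along a solution of `a² ä = -k` with energy `E = ȧ²/2 - k/a`, the Sundman time `s`, `ds = dt / a`,
turns the equation into the linear one `a_ss = 2E a + k`, and `a_s² = 2E a² + 2k a`. At the collapse
both `a` and `a_s` vanish, so in Sundman time `x` counted backwards from the collapse, `a` is the
solution `P` of `P'' = 2E P + k`, `P 0 = P' 0 = 0`: a cosh, quadratic or cosine profile according
to the sign of `E`. The time left until the collapse is `τ x = ∫₀ˣ P`, so `a t = P (τ⁻¹ (T - t))`,
and the rate follows from `P x ~ k x² / 2` and `τ x ~ k x³ / 6`. Subcriticality is exactly what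
places the initial data on the collapsing branch of the profile.
-/

open Real Set Filter Topology

theorem tendsto_div_pow_succ_of_hasDerivAt {f f' : ℝ → ℝ} {n : ℕ} {L : ℝ}
    (hf : ∀ x, HasDerivAt f (f' x) x) (hf0 : f 0 = 0)
    (hf' : Tendsto (fun x => f' x / x ^ n) (𝓝[>] 0) (𝓝 ((n + 1) * L))) :
    Tendsto (fun x => f x / x ^ (n + 1)) (𝓝[>] 0) (𝓝 L) := by
  have hpow (x : ℝ) : HasDerivAt (fun x : ℝ => x ^ (n + 1)) ((n + 1) * x ^ n) x := by
    simpa using hasDerivAt_pow (n + 1) x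
  have hzero {g : ℝ → ℝ} (hg : Continuous g) (hg0 : g 0 = 0) : Tendsto g (𝓝[>] 0) (𝓝 0) :=
    (hg.tendsto' 0 0 hg0).mono_left nhdsWithin_le_nhds
  refine HasDerivAt.lhopital_zero_nhdsGT (.of_forall hf) (.of_forall hpow) ?_
    (hzero (continuous_iff_continuousAt.2 fun x => (hf x).continuousAt) hf0)
    (hzero (continuous_pow _) (by simp)) ?_
  · filter_upwards [self_mem_nhdsWithin] with x (hx : 0 < x)
    positivity
  · have hn : (n + 1 : ℝ) ≠ 0 := by positivity
    convert hf'.div_const (n + 1) using 2 with x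
    · rw [div_div, mul_comm]
    · field_simp

theorem StrictMonoOn.exists_inverse_hasDerivAt {f f' : ℝ → ℝ} {α β : ℝ}
    (hmono : StrictMonoOn f (Icc α β)) (hαβ : α < β)
    (hf : ∀ x, HasDerivAt f (f' x) x) (hf' : ∀ x ∈ Ioo α β, f' x ≠ 0) :
    ∃ g : ℝ → ℝ, (∀ x ∈ Icc α β, g (f x) = x) ∧
      (∀ y ∈ Ioo (f α) (f β), g y ∈ Ioo α β ∧ f (g y) = y ∧ HasDerivAt g (f' (g y))⁻¹ y) ∧
      ContinuousWithinAt g (Ici (f α)) (f α) := by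
  have hcont : Continuous f := continuous_iff_continuousAt.2 fun x => (hf x).continuousAt
  have himage : f '' Icc α β = Icc (f α) (f β) :=
    hcont.continuousOn.image_Icc_of_monotoneOn hαβ.le hmono.monotoneOn
  set g := Function.invFunOn f (Icc α β)
  have hleft : LeftInvOn g f (Icc α β) := hmono.injOn.leftInvOn_invFunOn
  have hsurj : SurjOn f (Icc α β) (Icc (f α) (f β)) := himage.ge
  have hmaps : MapsTo g (Icc (f α) (f β)) (Icc α β) := hsurj.mapsTo_invFunOn
  have hright : RightInvOn g f (Icc (f α) (f β)) := hsurj.rightInvOn_invFunOn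
  have hgmono : MonotoneOn g (Icc (f α) (f β)) := fun y₁ h₁ y₂ h₂ h12 =>
    (hmono.le_iff_le (hmaps h₁) (hmaps h₂)).1 (by rwa [hright h₁, hright h₂])
  have hgimage : g '' Icc (f α) (f β) = Icc α β := by rw [← himage, hleft.image_image]
  have hfα : f α < f β := hmono (left_mem_Icc.2 hαβ.le) (right_mem_Icc.2 hαβ.le) hαβ
  refine ⟨g, hleft, fun y hy => ?_, ?_⟩
  · have hyIcc := Ioo_subset_Icc_self hy
    have hgy : g y ∈ Ioo α β := by
      refine ⟨(hmaps hyIcc).1.lt_of_ne ?_, (hmaps hyIcc).2.lt_of_ne ?_⟩ <;> rintro h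
      · exact hy.1.ne (by rw [h, hright hyIcc])
      · exact hy.2.ne (by rw [← h, hright hyIcc])
    have hgcont : ContinuousAt g y := continuousAt_of_monotoneOn_of_image_mem_nhds hgmono
      (Icc_mem_nhds hy.1 hy.2) (by rw [hgimage]; exact Icc_mem_nhds hgy.1 hgy.2)
    refine ⟨hgy, hright hyIcc, .of_local_left_inverse hgcont (hf (g y)) (hf' _ hgy) ?_⟩
    filter_upwards [Icc_mem_nhds hy.1 hy.2] with z hz using hright hz
  · refine continuousWithinAt_right_of_monotoneOn_of_image_mem_nhdsWithin hgmono
      (Icc_mem_nhdsGE hfα) ?_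
    rw [hgimage, hleft (left_mem_Icc.2 hαβ.le)]
    exact Icc_mem_nhdsGE hαβ

theorem tendsto_sub_nhdsLT (T : ℝ) : Tendsto (fun t => T - t) (𝓝[<] T) (𝓝[>] 0) := by
  refine tendsto_nhdsWithin_iff.2 ⟨?_, ?_⟩
  · exact ((continuous_const.sub continuous_id).tendsto' T 0 (sub_self T)).mono_left
      nhdsWithin_le_nhds
  · filter_upwards [self_mem_nhdsWithin] with t (ht : t < T) using sub_pos.2 ht

theorem exists_sundmanTime {P : ℝ → ℝ} (hP : Continuous P) {v w : ℝ} (hv : 0 < v) (hvw : v < w)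
    (hpos : ∀ x ∈ Ioo 0 w, 0 < P x) :
    ∃ T, 0 < T ∧ ∃ x : ℝ → ℝ, x 0 = v ∧ Tendsto x (𝓝[<] T) (𝓝[>] 0) ∧ ∀ t ∈ Ico 0 T,
      x t ∈ Ioo 0 w ∧ ∫ y in 0..x t, P y = T - t ∧ HasDerivAt x (-(P (x t))⁻¹) t := by
  set τ := fun x => ∫ y in 0..x, P y
  have hτ (x : ℝ) : HasDerivAt τ (P x) x := (hP.integral_hasStrictDerivAt 0 x).hasDerivAt
  have hτ0 : τ 0 = 0 := by simp [τ]
  have hτmono : StrictMonoOn τ (Icc 0 w) :=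
    strictMonoOn_of_deriv_pos (convex_Icc 0 w) (HasDerivAt.continuousOn fun x _ => hτ x)
      fun x hx => by rw [(hτ x).deriv]; exact hpos x (by simpa using hx)
  obtain ⟨g, hgτ, hg, hg0⟩ :=
    hτmono.exists_inverse_hasDerivAt (hv.trans hvw) hτ fun x hx => (hpos x hx).ne'
  have h0Icc : (0 : ℝ) ∈ Icc 0 w := left_mem_Icc.2 (hv.trans hvw).le
  have hvIcc : v ∈ Icc 0 w := ⟨hv.le, hvw.le⟩
  rw [hτ0] at hg hg0
  have hg00 : g 0 = 0 := by simpa [hτ0] using hgτ 0 h0Icc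
  have hx (t : ℝ) (ht : t ∈ Ico 0 (τ v)) :
      g (τ v - t) ∈ Ioo 0 w ∧ τ (g (τ v - t)) = τ v - t ∧
        HasDerivAt (fun t => g (τ v - t)) (-(P (g (τ v - t)))⁻¹) t := by
    obtain ⟨hxw, hτx, hgd⟩ := hg (τ v - t)
      ⟨by linarith [ht.2], by linarith [ht.1, hτmono hvIcc (right_mem_Icc.2 h0Icc.2) hvw]⟩
    exact ⟨hxw, hτx, (hgd.comp t ((hasDerivAt_id t).const_sub _)).congr_deriv (by simp)⟩
  have hT : 0 < τ v := hτ0 ▸ hτmono h0Icc hvIcc hv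
  refine ⟨τ v, hT, fun t => g (τ v - t), by simpa using hgτ v hvIcc,
    tendsto_nhdsWithin_iff.2 ⟨?_, ?_⟩, hx⟩
  · exact hg00 ▸ hg0.tendsto.comp
      ((tendsto_sub_nhdsLT _).mono_right (nhdsWithin_mono _ Ioi_subset_Ici_self))
  · filter_upwards [Ioo_mem_nhdsLT hT] with t ht using (hx t (Ioo_subset_Ico_self ht)).1.1

def IsCollapsingSolution (k a₀ a₁ T : ℝ) (a a' a'' : ℝ → ℝ) : Prop :=
  a 0 = a₀ ∧ a' 0 = a₁ ∧ ContinuousOn a'' (Ico 0 T) ∧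
    (∀ t ∈ Ico (0 : ℝ) T, 0 < a t ∧ HasDerivWithinAt a (a' t) (Ico 0 T) t ∧
      HasDerivWithinAt a' (a'' t) (Ico 0 T) t ∧ a t ^ 2 * a'' t = -k) ∧
    Tendsto a (𝓝[<] T) (𝓝 0) ∧
    Tendsto (fun t => a t * (T - t) ^ (-(2 : ℝ) / 3)) (𝓝[<] T) (𝓝 ((9 * k / 2) ^ ((1 : ℝ) / 3)))

/-- `P x` is the scale factor `x` units of Sundman time before the collapse, `P'` its derivative in
Sundman time, and `c` twice the energy. -/
structure IsSundmanProfile (c k : ℝ) (P P' : ℝ → ℝ) : Prop where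
  hasDerivAt : ∀ x, HasDerivAt P (P' x) x
  hasDerivAt_deriv : ∀ x, HasDerivAt P' (c * P x + k) x
  apply_zero : P 0 = 0
  deriv_zero : P' 0 = 0

namespace IsSundmanProfile

variable {c k a₀ a₁ : ℝ} {P P' : ℝ → ℝ}

theorem continuous (hP : IsSundmanProfile c k P P') : Continuous P :=
  continuous_iff_continuousAt.2 fun x => (hP.hasDerivAt x).continuousAt

theorem deriv_sq (hP : IsSundmanProfile c k P P') (x : ℝ) :
    P' x ^ 2 = c * P x ^ 2 + 2 * k * P x := by
  have hF (y : ℝ) : HasDerivAt (fun y => P' y ^ 2 - c * P y ^ 2 - 2 * k * P y) 0 y := by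
    refine ((((hP.hasDerivAt_deriv y).fun_pow 2).sub
      (((hP.hasDerivAt y).fun_pow 2).const_mul c)).sub
      ((hP.hasDerivAt y).const_mul (2 * k))).congr_deriv ?_
    ring
  have := is_const_of_deriv_eq_zero (fun y => (hF y).differentiableAt) (fun y => (hF y).deriv) x 0
  simp only [hP.apply_zero, hP.deriv_zero] at this
  linarith

theorem tendsto_div_sq (hP : IsSundmanProfile c k P P') :
    Tendsto (fun x => P x / x ^ 2) (𝓝[>] 0) (𝓝 (k / 2)) := by
  have hcont : Continuous fun x => c * P x + k := by have := hP.continuous; fun_prop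
  have hP' : Tendsto (fun x => P' x / x ^ (0 + 1)) (𝓝[>] 0) (𝓝 k) :=
    tendsto_div_pow_succ_of_hasDerivAt hP.hasDerivAt_deriv hP.deriv_zero
      (by simpa [hP.apply_zero] using (hcont.tendsto 0).mono_left nhdsWithin_le_nhds)
  exact tendsto_div_pow_succ_of_hasDerivAt hP.hasDerivAt hP.apply_zero (by
    convert hP' using 2
    norm_num [mul_div_cancel₀])

theorem tendsto_integral_div_cube (hP : IsSundmanProfile c k P P') :
    Tendsto (fun x => (∫ y in 0..x, P y) / x ^ 3) (𝓝[>] 0) (𝓝 (k / 6)) := by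
  refine tendsto_div_pow_succ_of_hasDerivAt (n := 2)
    (fun x => (hP.continuous.integral_hasStrictDerivAt 0 x).hasDerivAt) (by simp) ?_
  convert hP.tendsto_div_sq using 2
  norm_num
  ring

theorem tendsto_mul_integral_rpow (hP : IsSundmanProfile c k P P') (hk : 0 < k) :
    Tendsto (fun x => P x * (∫ y in 0..x, P y) ^ (-(2 : ℝ) / 3)) (𝓝[>] 0)
      (𝓝 ((9 * k / 2) ^ ((1 : ℝ) / 3))) := by
  have hτ := hP.tendsto_integral_div_cube
  have hlim := hP.tendsto_div_sq.mul (hτ.rpow_const (p := -(2 : ℝ) / 3) (.inl (by positivity)))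
  have hconst : k / 2 * (k / 6) ^ (-(2 : ℝ) / 3) = (9 * k / 2) ^ ((1 : ℝ) / 3) := by
    rw [one_div, eq_rpow_inv (by positivity) (by positivity) (by norm_num),
      mul_rpow (by positivity) (by positivity), ← rpow_mul (by positivity)]
    norm_num
    field_simp
    ring
  rw [← hconst]
  refine hlim.congr' ?_
  filter_upwards [self_mem_nhdsWithin, hτ.eventually (lt_mem_nhds (by positivity : 0 < k / 6))]
    with x (hx : 0 < x) hτx
  have hτx : 0 < ∫ y in 0..x, P y := (div_pos_iff_of_pos_right (by positivity)).1 hτx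
  have hx3 : (x ^ 3) ^ (-(2 : ℝ) / 3) = (x ^ 2)⁻¹ := by
    rw [← rpow_natCast, ← rpow_mul hx.le, ← rpow_natCast, ← rpow_neg hx.le]
    norm_num
  rw [div_rpow hτx.le (by positivity), hx3]
  field_simp

theorem exists_isCollapsingSolution (hP : IsSundmanProfile c k P P') (hk : 0 < k) {v w : ℝ}
    (hv : 0 < v) (hvw : v < w) (hpos : ∀ x ∈ Ioo 0 w, 0 < P x) :
    ∃ T, 0 < T ∧ ∃ a a' a'', IsCollapsingSolution k (P v) (-P' v / P v) T a a' a'' := by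
  obtain ⟨T, hT, x, hx0, hxlim, hx⟩ := exists_sundmanTime hP.continuous hv hvw hpos
  have hPx (t : ℝ) (ht : t ∈ Ico 0 T) : 0 < P (x t) := hpos _ (hx t ht).1
  refine ⟨T, hT, fun t => P (x t), fun t => -P' (x t) / P (x t), fun t => -k / P (x t) ^ 2,
    by simp only [hx0], by simp only [hx0], ?_, fun t ht => ⟨hPx t ht, ?_, ?_, ?_⟩, ?_, ?_⟩
  · exact fun t ht => (continuousAt_const.div
      ((hP.continuous.continuousAt.comp (hx t ht).2.2.continuousAt).pow 2)
      (pow_ne_zero 2 (hPx t ht).ne')).continuousWithinAt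
  · exact ((hP.hasDerivAt (x t)).comp t (hx t ht).2.2).hasDerivWithinAt.congr_deriv (by ring)
  · have hxd := (hx t ht).2.2
    refine ((((hP.hasDerivAt_deriv (x t)).comp t hxd).neg.div ((hP.hasDerivAt (x t)).comp t hxd)
      (hPx t ht).ne').congr_deriv ?_).hasDerivWithinAt
    have := hPx t ht
    simp only [Function.comp_apply, Pi.neg_apply]
    field_simp
    linear_combination -hP.deriv_sq (x t)
  · have := hPx t ht
    field_simp
  · exact (hP.continuous.tendsto' 0 0 hP.apply_zero).comp (hxlim.mono_right nhdsWithin_le_nhds)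
  · refine ((hP.tendsto_mul_integral_rpow hk).comp hxlim).congr' ?_
    filter_upwards [Ioo_mem_nhdsLT hT] with t ht
    rw [Function.comp_apply, (hx t (Ioo_subset_Ico_self ht)).2.1]

theorem neg_deriv_div_eq (hP : IsSundmanProfile (a₁ ^ 2 - 2 * k / a₀) k P P') (ha₀ : 0 < a₀)
    {v : ℝ} (hv : P v = a₀) (hsign : a₁ * P' v ≤ 0) : -P' v / P v = a₁ := by
  have hsq : P' v ^ 2 = (a₀ * a₁) ^ 2 := by
    rw [hP.deriv_sq, hv]
    field_simp
    ring
  rw [hv, div_eq_iff ha₀.ne']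
  rcases sq_eq_sq_iff_eq_or_eq_neg.1 hsq with h | h
  · rw [h] at hsign
    have : a₁ ^ 2 ≤ 0 := by nlinarith
    obtain rfl : a₁ = 0 := pow_eq_zero_iff two_ne_zero |>.1 (le_antisymm this (sq_nonneg a₁))
    simp [h]
  · rw [h]
    ring

end IsSundmanProfile

variable {c k ω a₀ a₁ : ℝ}

theorem isSundmanProfile_cosh (hω : ω ≠ 0) :
    IsSundmanProfile (ω ^ 2) k (fun x => k * (cosh (ω * x) - 1) / ω ^ 2)
      (fun x => k * sinh (ω * x) / ω) where
  hasDerivAt x := by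
    refine ((((hasDerivAt_id' x).const_mul ω).cosh.sub_const 1).const_mul k
      |>.div_const _).congr_deriv ?_
    field_simp
  hasDerivAt_deriv x := by
    refine ((((hasDerivAt_id' x).const_mul ω).sinh).const_mul k |>.div_const ω).congr_deriv ?_
    field_simp
    ring
  apply_zero := by simp
  deriv_zero := by simp

theorem isSundmanProfile_sq : IsSundmanProfile 0 k (fun x => k * x ^ 2 / 2) (fun x => k * x) where
  hasDerivAt x := ((hasDerivAt_pow 2 x).const_mul k |>.div_const 2).congr_deriv (by ring)
  hasDerivAt_deriv x := ((hasDerivAt_id x).const_mul k).congr_deriv (by simp)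
  apply_zero := by simp
  deriv_zero := by simp

theorem isSundmanProfile_cos (hω : ω ≠ 0) :
    IsSundmanProfile (-ω ^ 2) k (fun x => k * (1 - cos (ω * x)) / ω ^ 2)
      (fun x => k * sin (ω * x) / ω) where
  hasDerivAt x := by
    refine ((((hasDerivAt_id' x).const_mul ω).cos.const_sub 1).const_mul k
      |>.div_const _).congr_deriv ?_
    field_simp
  hasDerivAt_deriv x := by
    refine ((((hasDerivAt_id' x).const_mul ω).sin).const_mul k |>.div_const ω).congr_deriv ?_
    field_simp
    ring
  apply_zero := by simp
  deriv_zero := by simp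

theorem exists_cos_eq_of_mul_sin_nonpos {y : ℝ} (hy₁ : -1 ≤ y) (hy₂ : y < 1) (b : ℝ) :
    ∃ φ, 0 < φ ∧ φ < 2 * π ∧ cos φ = y ∧ b * sin φ ≤ 0 := by
  have hθ : 0 < arccos y := arccos_pos.2 hy₂
  have hθπ : arccos y ≤ π := arccos_le_pi y
  have hsin : 0 ≤ sin (arccos y) := by rw [sin_arccos]; positivity
  rcases le_or_gt b 0 with hb | hb
  · exact ⟨arccos y, hθ, by linarith [pi_pos], cos_arccos hy₁ hy₂.le,
      mul_nonpos_of_nonpos_of_nonneg hb hsin⟩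
  · refine ⟨2 * π - arccos y, by linarith [pi_pos], by linarith, ?_, ?_⟩
    · rw [cos_two_pi_sub, cos_arccos hy₁ hy₂.le]
    · rw [sin_two_pi_sub]; nlinarith

theorem one_sub_cos_pos_of_mem_Ioo {x : ℝ} (hx : x ∈ Ioo 0 (2 * π)) : 0 < 1 - cos x := by
  have := (cos_eq_one_iff_of_lt_of_lt (by linarith [hx.1, pi_pos]) hx.2).not.2 hx.1.ne'
  linarith [cos_le_one x, lt_of_le_of_ne (cos_le_one x) this]

/-- Only the sign of `P' v` is prescribed: the energy identity `deriv_sq` fixes its size. -/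
def AttainsInitialData (a₀ a₁ : ℝ) (P P' : ℝ → ℝ) : Prop :=
  ∃ v w, 0 < v ∧ v < w ∧ (∀ x ∈ Ioo 0 w, 0 < P x) ∧ P v = a₀ ∧ a₁ * P' v ≤ 0

theorem exists_isSundmanProfile_of_pos (hk : 0 < k) (hc : 0 < c) (ha₀ : 0 < a₀) (ha₁ : a₁ ≤ 0) :
    ∃ P P', IsSundmanProfile c k P P' ∧ AttainsInitialData a₀ a₁ P P' := by
  obtain ⟨ω, hω, rfl⟩ : ∃ ω, 0 < ω ∧ ω ^ 2 = c := ⟨√c, sqrt_pos.2 hc, sq_sqrt hc.le⟩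
  have hy : 1 < 1 + ω ^ 2 * a₀ / k := by simp only [lt_add_iff_pos_right]; positivity
  have hv : 0 < arcosh (1 + ω ^ 2 * a₀ / k) / ω := div_pos (arcosh_pos hy) hω
  refine ⟨_, _, isSundmanProfile_cosh hω.ne', _, _, hv, lt_add_one _, fun x hx => ?_, ?_, ?_⟩
  · have := sub_pos.2 (one_lt_cosh.2 (mul_pos hω hx.1).ne')
    positivity
  · simp only [mul_div_cancel₀ _ hω.ne', cosh_arcosh hy.le]
    field_simp
    ring
  · refine mul_nonpos_of_nonpos_of_nonneg ha₁ (div_nonneg (mul_nonneg hk.le ?_) hω.le)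
    exact sinh_nonneg_iff.2 (mul_nonneg hω.le hv.le)

theorem exists_isSundmanProfile_of_eq_zero (hk : 0 < k) (ha₀ : 0 < a₀) (ha₁ : a₁ ≤ 0) :
    ∃ P P', IsSundmanProfile 0 k P P' ∧ AttainsInitialData a₀ a₁ P P' := by
  have hv : 0 < √(2 * a₀ / k) := sqrt_pos.2 (by positivity)
  refine ⟨_, _, isSundmanProfile_sq, _, _, hv, lt_add_one _, fun x hx => ?_, ?_, ?_⟩
  · have := hx.1
    positivity
  · simp only [sq_sqrt (by positivity : 0 ≤ 2 * a₀ / k)]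
    field_simp
  · exact mul_nonpos_of_nonpos_of_nonneg ha₁ (mul_nonneg hk.le hv.le)

theorem exists_isSundmanProfile_of_neg (hk : 0 < k) (hc : c < 0) (ha₀ : 0 < a₀)
    (hca₀ : -c * a₀ ≤ 2 * k) :
    ∃ P P', IsSundmanProfile c k P P' ∧ AttainsInitialData a₀ a₁ P P' := by
  obtain ⟨ω, hω, rfl⟩ : ∃ ω, 0 < ω ∧ -ω ^ 2 = c :=
    ⟨√(-c), sqrt_pos.2 (neg_pos.2 hc), by rw [sq_sqrt (neg_pos.2 hc).le, neg_neg]⟩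
  obtain ⟨φ, hφ, hφ2π, hcos, hsin⟩ := exists_cos_eq_of_mul_sin_nonpos (y := 1 - ω ^ 2 * a₀ / k)
    (by rw [neg_neg] at hca₀; rw [le_sub_comm, div_le_iff₀ hk]; linarith)
    (by simp only [sub_lt_self_iff]; positivity) a₁
  refine ⟨_, _, isSundmanProfile_cos hω.ne', φ / ω, 2 * π / ω, div_pos hφ hω,
    div_lt_div_of_pos_right hφ2π hω, fun x hx => ?_, ?_, ?_⟩
  · have := one_sub_cos_pos_of_mem_Ioo (x := ω * x)
      ⟨mul_pos hω hx.1, by rw [← lt_div_iff₀' hω]; exact hx.2⟩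
    positivity
  · simp only [mul_div_cancel₀ _ hω.ne', hcos]
    field_simp
    ring
  · simp only [mul_div_cancel₀ _ hω.ne']
    rw [mul_div_assoc', div_nonpos_iff]
    exact .inr ⟨by nlinarith, hω.le⟩

theorem exists_isSundmanProfile (hk : 0 < k) (ha₀ : 0 < a₀) (ha₁ : a₁ < √(2 * k / a₀)) :
    ∃ P P', IsSundmanProfile (a₁ ^ 2 - 2 * k / a₀) k P P' ∧ AttainsInitialData a₀ a₁ P P' := by
  have hneg : 0 ≤ a₁ ^ 2 - 2 * k / a₀ → a₁ ≤ 0 := fun hc => by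
    by_contra! h
    have := (lt_sqrt h.le).1 ha₁
    linarith
  rcases lt_trichotomy (a₁ ^ 2 - 2 * k / a₀) 0 with hc | hc | hc
  · refine exists_isSundmanProfile_of_neg hk hc ha₀ ?_
    rw [neg_sub, sub_mul, div_mul_cancel₀ _ ha₀.ne']
    nlinarith [sq_nonneg a₁]
  · rw [hc]
    exact exists_isSundmanProfile_of_eq_zero hk ha₀ (hneg hc.ge)
  · exact exists_isSundmanProfile_of_pos hk hc ha₀ (hneg hc.le)

theorem exists_isCollapsingSolution_of_lt_sqrt (hk : 0 < k) (ha₀ : 0 < a₀)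
    (ha₁ : a₁ < √(2 * k / a₀)) :
    ∃ T, 0 < T ∧ ∃ a a' a'', IsCollapsingSolution k a₀ a₁ T a a' a'' := by
  obtain ⟨P, P', hP, v, w, hv, hvw, hpos, hPv, hsign⟩ := exists_isSundmanProfile hk ha₀ ha₁
  have := hP.exists_isCollapsingSolution hk hv hvw hpos
  rwa [hP.neg_deriv_div_eq ha₀ hPv hsign, hPv] at this

/-- Proposition (subcritical case of the separable collapse ODE `a²a'' = −Λ/3`):
for `Λ > 0`, `a₀ > 0` and `a₁ < √(2Λ/(3a₀))`, there exist `T ∈ (0,∞)` and a positive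
twice continuously differentiable solution on `[0,T)` with the given initial data,
which collapses to zero at `t = T` at the universal rate
`a(t)·(T − t)^{−2/3} → (3Λ/2)^{1/3}`. -/
theorem subcritical_collapse
    (Λ a₀ a₁ : ℝ) (hΛ : 0 < Λ) (ha₀ : 0 < a₀)
    (ha₁ : a₁ < Real.sqrt (2 * Λ / (3 * a₀))) :
    ∃ T : ℝ, 0 < T ∧
    ∃ a a' a'' : ℝ → ℝ,
      a 0 = a₀ ∧ a' 0 = a₁ ∧
      ContinuousOn a'' (Ico 0 T) ∧
      (∀ t ∈ Ico (0 : ℝ) T,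
        0 < a t ∧
        HasDerivWithinAt a (a' t) (Ico 0 T) t ∧
        HasDerivWithinAt a' (a'' t) (Ico 0 T) t ∧
        (a t) ^ 2 * a'' t = -Λ / 3) ∧
      Tendsto a (nhdsWithin T (Iio T)) (nhds 0) ∧
      Tendsto (fun t => a t * (T - t) ^ (-(2 : ℝ) / 3)) (nhdsWithin T (Iio T))
        (nhds ((3 * Λ / 2) ^ ((1 : ℝ) / 3))) := by
  obtain ⟨T, hT, a, a', a'', ha0, ha'0, hcont, hode, hlim, hrate⟩ :=
    exists_isCollapsingSolution_of_lt_sqrt (k := Λ / 3) (by positivity) ha₀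
      (by rwa [show 2 * (Λ / 3) / a₀ = 2 * Λ / (3 * a₀) by ring])
  refine ⟨T, hT, a, a', a'', ha0, ha'0, hcont, fun t ht => ?_, hlim, ?_⟩
  · rw [neg_div]
    exact hode t ht
  · rwa [show 3 * Λ / 2 = 9 * (Λ / 3) / 2 by ring]
end

section
/- Let K, δ_c, n, ν ∈ ℝ with δ_c > 0, n ≠ 0, n ≠ −1, ν ≠ −1. Define ρ_c = (n²K/(1+n))·δ_c^{1+1/n}, p_c = (nK/(1+n))·δ_c^{1+1/n}, c_L² = (3/n)·(1−ν)/(1+ν), and c_T² = (3/(2n))·(1−2ν)/(1+ν). If the admissibility conditions hold — ρ_c > 0, p_c > 0, 0 < c_L² ≤ 1, 0 ≤ c_T² ≤ 1, c_L² > (4/3)c_T², and ρ_c ≥ |p_c| — then K > 0, −1 < ν ≤ 1/2, and n ≥ 3(1−ν)/(1+ν). -/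
open Real

/-- Proposition (necessary conditions for physically admissible radially compressed
balls in the LIS model): if the central data
`ρ_c = (n²K/(1+n))δ_c^{1+1/n}`, `p_c = (nK/(1+n))δ_c^{1+1/n}`,
`c_L² = (3/n)(1−ν)/(1+ν)`, `c_T² = (3/(2n))(1−2ν)/(1+ν)` satisfy the admissibility
conditions, then `K > 0`, `−1 < ν ≤ 1/2` and `n ≥ 3(1−ν)/(1+ν)`. -/
theorem lis_admissibility
    (K δc n ν : ℝ) (hδc : 0 < δc) (hn0 : n ≠ 0) (hn1 : n ≠ -1) (hν : ν ≠ -1)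
    (hρc : 0 < n ^ 2 * K / (1 + n) * δc ^ (1 + 1 / n))
    (hpc : 0 < n * K / (1 + n) * δc ^ (1 + 1 / n))
    (hcL0 : 0 < 3 / n * ((1 - ν) / (1 + ν)))
    (hcL1 : 3 / n * ((1 - ν) / (1 + ν)) ≤ 1)
    (hcT0 : 0 ≤ 3 / (2 * n) * ((1 - 2 * ν) / (1 + ν)))
    (hcT1 : 3 / (2 * n) * ((1 - 2 * ν) / (1 + ν)) ≤ 1)
    (hLT : 4 / 3 * (3 / (2 * n) * ((1 - 2 * ν) / (1 + ν))) < 3 / n * ((1 - ν) / (1 + ν)))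
    (hDEC : |n * K / (1 + n) * δc ^ (1 + 1 / n)| ≤ n ^ 2 * K / (1 + n) * δc ^ (1 + 1 / n)) :
    0 < K ∧ (-1 < ν ∧ ν ≤ 1 / 2) ∧ 3 * ((1 - ν) / (1 + ν)) ≤ n := by
  have hν0 : (1 : ℝ) + ν ≠ 0 := by
    intro h; apply hν; linarith
  -- From c_L² − (4/3)c_T² = 1/n and the hypothesis hLT, we get n > 0.
  have hkey : 3 / n * ((1 - ν) / (1 + ν)) - 4 / 3 * (3 / (2 * n) * ((1 - 2 * ν) / (1 + ν)))
      = 1 / n := by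
    field_simp
    ring
  have hninv : 0 < 1 / n := by linarith [hLT, hkey]
  have hnpos : 0 < n := by
    by_contra h
    push_neg at h
    have : 1 / n ≤ 0 := div_nonpos_of_nonneg_of_nonpos zero_le_one h
    linarith
  -- central normalized density power is positive
  have hx : 0 < δc ^ (1 + 1 / n) := Real.rpow_pos_of_pos hδc _
  -- 1 + ν > 0
  have hfrac : 0 < (1 - ν) / (1 + ν) := by
    have h3n : 0 < 3 / n := by positivity
    nlinarith [hcL0]
  have hν1 : -1 < ν := by
    rcases div_pos_iff.mp hfrac with ⟨h1, h2⟩ | ⟨h1, h2⟩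
    · linarith
    · linarith
  have hνadd : 0 < 1 + ν := by linarith
  -- ν ≤ 1/2
  have hfracT : 0 ≤ (1 - 2 * ν) / (1 + ν) := by
    have h3n : 0 < 3 / (2 * n) := by positivity
    nlinarith [hcT0]
  have hν2 : ν ≤ 1 / 2 := by
    have : 0 ≤ 1 - 2 * ν := by
      by_contra h
      push_neg at h
      have : (1 - 2 * ν) / (1 + ν) < 0 := div_neg_of_neg_of_pos (by linarith) hνadd
      linarith
    linarith
  -- K > 0
  have hK : 0 < K := by
    have h1 : 0 < n * K / (1 + n) := by
      rcases mul_pos_iff.mp hpc with ⟨h, _⟩ | ⟨_, h⟩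
      · exact h
      · linarith
    have h2 : 0 < n * K := by
      rcases div_pos_iff.mp h1 with ⟨h, _⟩ | ⟨_, h⟩
      · exact h
      · linarith
    nlinarith
  refine ⟨hK, ⟨hν1, hν2⟩, ?_⟩
  -- n ≥ 3(1−ν)/(1+ν) from c_L² ≤ 1
  have : 3 * ((1 - ν) / (1 + ν)) / n ≤ 1 := by
    calc 3 * ((1 - ν) / (1 + ν)) / n = 3 / n * ((1 - ν) / (1 + ν)) := by ring
    _ ≤ 1 := hcL1
  exact (div_le_one hnpos).mp this
end

section
/- Let K, δ_c, n, ν ∈ ℝ with δ_c > 0, n ≠ 0, n ≠ −1, ν ≠ −1. Define ρ_c = (Kn/(1+n))·(1 + n·δ_c^{1+1/n}), p_c = (Kn/(1+n))·(δ_c^{1+1/n} − 1), c_L² = (3/n)·(1−ν)/(1+ν), and c_T² = (3/(2n))·(1−2ν)/(1+ν). If the admissibility conditions hold — ρ_c > 0, p_c > 0, 0 < c_L² ≤ 1, 0 ≤ c_T² ≤ 1, c_L² > (4/3)c_T², and ρ_c ≥ |p_c| — then K > 0, δ_c > 1, −1 < ν ≤ 1/2, and n ≥ 3(1−ν)/(1+ν).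 -/
open Real

set_option maxHeartbeats 1000000 in
/-- Proposition (necessary conditions for physically admissible radially compressed
balls in the AIS model): if the central data
`ρ_c = (Kn/(1+n))(1 + nδ_c^{1+1/n})`, `p_c = (Kn/(1+n))(δ_c^{1+1/n} − 1)`,
`c_L² = (3/n)(1−ν)/(1+ν)`, `c_T² = (3/(2n))(1−2ν)/(1+ν)` satisfy the admissibility
conditions, then `K > 0`, `δ_c > 1`, `−1 < ν ≤ 1/2` and `n ≥ 3(1−ν)/(1+ν)`. -/
theorem ais_admissibility
    (K δc n ν : ℝ) (hδc : 0 < δc) (hn0 : n ≠ 0) (hn1 : n ≠ -1) (hν : ν ≠ -1)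
    (hρc : 0 < K * n / (1 + n) * (1 + n * δc ^ (1 + 1 / n)))
    (hpc : 0 < K * n / (1 + n) * (δc ^ (1 + 1 / n) - 1))
    (hcL0 : 0 < 3 / n * ((1 - ν) / (1 + ν)))
    (hcL1 : 3 / n * ((1 - ν) / (1 + ν)) ≤ 1)
    (hcT0 : 0 ≤ 3 / (2 * n) * ((1 - 2 * ν) / (1 + ν)))
    (hcT1 : 3 / (2 * n) * ((1 - 2 * ν) / (1 + ν)) ≤ 1)
    (hLT : 4 / 3 * (3 / (2 * n) * ((1 - 2 * ν) / (1 + ν))) < 3 / n * ((1 - ν) / (1 + ν)))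
    (hDEC : |K * n / (1 + n) * (δc ^ (1 + 1 / n) - 1)|
      ≤ K * n / (1 + n) * (1 + n * δc ^ (1 + 1 / n))) :
    0 < K ∧ 1 < δc ∧ (-1 < ν ∧ ν ≤ 1 / 2) ∧ 3 * ((1 - ν) / (1 + ν)) ≤ n := by
  have hν1 : (1 + ν) ≠ 0 := fun h => hν (by linarith)
  -- From hLT we get 1/n > 0, hence n > 0.
  have hkey : 3 / n * ((1 - ν) / (1 + ν))
      - 4 / 3 * (3 / (2 * n) * ((1 - 2 * ν) / (1 + ν))) = 1 / n := by
    field_simp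
    ring
  have hninv : 0 < 1 / n := by linarith
  have hn : 0 < n := by
    rcases lt_trichotomy n 0 with h | h | h
    · exact absurd hninv (not_lt.mpr (le_of_lt (one_div_neg.mpr h)))
    · exact absurd h hn0
    · exact h
  have h3n : 0 < 3 / n := by positivity
  -- (1-ν)/(1+ν) > 0
  have hfrac : 0 < (1 - ν) / (1 + ν) := by
    rcases mul_pos_iff.mp hcL0 with ⟨_, h⟩ | ⟨h, _⟩
    · exact h
    · linarith
  have hν' : -1 < ν ∧ ν < 1 := by
    rcases div_pos_iff.mp hfrac with ⟨h1, h2⟩ | ⟨h1, h2⟩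
    · constructor <;> linarith
    · constructor <;> linarith
  have h1ν : 0 < 1 + ν := by linarith [hν'.1]
  -- ν ≤ 1/2
  have h2n : 0 < 3 / (2 * n) := by positivity
  have hfracT : 0 ≤ (1 - 2 * ν) / (1 + ν) := by
    by_contra h
    push_neg at h
    nlinarith
  have hν2 : ν ≤ 1 / 2 := by
    have := (div_nonneg_iff.mp hfracT)
    rcases this with ⟨h1, _⟩ | ⟨_, h2⟩
    · linarith
    · linarith
  -- n ≥ 3(1-ν)/(1+ν)
  have hnge : 3 * ((1 - ν) / (1 + ν)) ≤ n := by
    have h' : 3 * ((1 - ν) / (1 + ν)) / n ≤ 1 := by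
      have : 3 / n * ((1 - ν) / (1 + ν)) = 3 * ((1 - ν) / (1 + ν)) / n := by ring
      linarith [this ▸ hcL1]
    exact (div_le_one hn).mp h'
  -- Now K > 0 and δc > 1
  have hxpos : 0 < δc ^ (1 + 1 / n) := Real.rpow_pos_of_pos hδc _
  have h1n : 0 < 1 + n := by linarith
  have hApos : 0 < K * n / (1 + n) := by
    rcases lt_trichotomy (K * n / (1 + n)) 0 with h | h | h
    · exfalso
      have hx1 : 1 + n * δc ^ (1 + 1 / n) ≤ 0 := by
        by_contra h'
        push_neg at h'
        nlinarith
      nlinarith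
    · rw [h] at hpc; simp at hpc
    · exact h
  have hKn : 0 < K * n := by
    have := (div_pos_iff.mp hApos)
    rcases this with ⟨h1, _⟩ | ⟨_, h2⟩
    · exact h1
    · linarith
  have hK : 0 < K := by
    rcases mul_pos_iff.mp hKn with ⟨h1, _⟩ | ⟨_, h2⟩
    · exact h1
    · linarith
  have hx1 : 1 < δc ^ (1 + 1 / n) := by
    have : 0 < δc ^ (1 + 1 / n) - 1 := by
      rcases mul_pos_iff.mp hpc with ⟨_, h⟩ | ⟨h, _⟩
      · exact h
      · linarith
    linarith
  have hexp : 0 < 1 + 1 / n := by positivity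
  have hδ1 : 1 < δc := by
    by_contra h
    push_neg at h
    have hle : δc ^ (1 + 1 / n) ≤ 1 := Real.rpow_le_one hδc.le h hexp.le
    linarith
  exact ⟨hK, hδ1, ⟨hν'.1, hν2⟩, hnge⟩
end

section
/- Let δ > 0, v ∈ ℝ, cL ∈ ℝ with 0 < cL ≤ 1, and let k₁, k₂ ∈ ℝ be arbitrary. Set ⟨v⟩ = √(1 + v²) and v_b = v/⟨v⟩. Define the 3×3 real matrices A⁰ = [[⟨v⟩, δv/⟨v⟩, 0], [v·cL²/(⟨v⟩δ), 1/⟨v⟩, k₁], [0, 0, ⟨v⟩]] and Aʳ = [[v, δ, 0], [cL²/δ, v/⟨v⟩², k₂], [0, 0, v]]. Then A⁰ is invertible, the three real numbers λ₀ = v_b, λ₊ = (v_b + cL)/(1 + v_b·cL), λ₋ = (v_b − cL)/(1 − v_b·cL) are pairwise distinct, and the set of real eigenvalues of (A⁰)⁻¹Aʳ is exactly {λ₀, λ₊, λ₋}; equivalently, for λ ∈ ℝ, det(Aʳ − λA⁰) = 0 if and only if λ ∈ {λ₀, λ₊, λ₋}. -/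
/-!
Both matrices are block upper triangular, and expanding along the last row gives
`det(Aʳ - λA⁰) = ⟨v⟩ (v_b - λ) ((v_b - λ)² - c_L² (1 - λ v_b)²)`. The quadratic factor
splits into the two linear factors `v_b - λ ± c_L (1 - λ v_b)`, whose roots are the
relativistic sums `(v_b ± c_L)/(1 ± v_b c_L)`. Since `|v_b| < 1` and `c_L ≤ 1`, the
denominators `1 ± v_b c_L` are positive, which also makes `det A⁰ = ⟨v⟩ (1 - c_L² v_b²)`
nonzero, and the three roots differ pairwise by nonzero multiples of `c_L (1 - v_b²)`.
Finally, for invertible `A` the spectrum of `A⁻¹B` is the zero set of `λ ↦ det(B - λA)`.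
-/

open Real Matrix

/-- The boost velocity `v_b = v/⟨v⟩`, with `⟨v⟩ = √(1 + v²)`. -/
noncomputable def boostVel (v : ℝ) : ℝ := v / Real.sqrt (1 + v ^ 2)

/-- The matrix `A⁰` of the spherically symmetric elastic system in Minkowski
spacetime. -/
noncomputable def A0mat (δ v cL k₁ : ℝ) : Matrix (Fin 3) (Fin 3) ℝ :=
  !![Real.sqrt (1 + v ^ 2), δ * v / Real.sqrt (1 + v ^ 2), 0;
     v * cL ^ 2 / (Real.sqrt (1 + v ^ 2) * δ), 1 / Real.sqrt (1 + v ^ 2), k₁;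
     0, 0, Real.sqrt (1 + v ^ 2)]

/-- The matrix `Aʳ` of the spherically symmetric elastic system in Minkowski
spacetime. -/
noncomputable def ArMat (δ v cL k₂ : ℝ) : Matrix (Fin 3) (Fin 3) ℝ :=
  !![v, δ, 0;
     cL ^ 2 / δ, v / (1 + v ^ 2), k₂;
     0, 0, v]

theorem Matrix.mem_spectrum_inv_mul_iff {K n : Type*} [Field K] [Fintype n] [DecidableEq n]
    {A B : Matrix n n K} (hA : IsUnit A.det) (μ : K) :
    μ ∈ spectrum K (A⁻¹ * B) ↔ (B - μ • A).det = 0 := by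
  have hfactor : algebraMap K (Matrix n n K) μ - A⁻¹ * B = -(A⁻¹ * (B - μ • A)) := by
    rw [Algebra.algebraMap_eq_smul_one, Matrix.mul_sub, Matrix.mul_smul,
      Matrix.nonsing_inv_mul _ hA, neg_sub]
  rw [spectrum.mem_iff, hfactor, IsUnit.neg_iff, Matrix.isUnit_iff_isUnit_det, Matrix.det_mul,
    IsUnit.mul_iff, Matrix.isUnit_nonsing_inv_det_iff, and_iff_right hA, isUnit_iff_ne_zero,
    not_not]

/-- Relativistic addition of the collinear velocities `w` and `c`. -/
noncomputable def velAdd (w c : ℝ) : ℝ := (w + c) / (1 + w * c)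

theorem velAdd_neg (w c : ℝ) : velAdd w (-c) = (w - c) / (1 - w * c) := by
  simp only [velAdd, mul_neg, ← sub_eq_add_neg]

theorem sub_add_mul_one_sub_mul_eq_zero_iff {w c : ℝ} (h : 1 + w * c ≠ 0) (μ : ℝ) :
    w - μ + c * (1 - μ * w) = 0 ↔ μ = velAdd w c := by
  rw [velAdd, eq_div_iff h]
  constructor <;> intro h <;> linear_combination -h

theorem sq_sub_sq_mul_eq_zero_iff {w c : ℝ} (hp : 1 + w * c ≠ 0) (hm : 1 + w * -c ≠ 0)
    (μ : ℝ) :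
    (w - μ) ^ 2 - c ^ 2 * (1 - μ * w) ^ 2 = 0 ↔ μ = velAdd w c ∨ μ = velAdd w (-c) := by
  rw [show (w - μ) ^ 2 - c ^ 2 * (1 - μ * w) ^ 2
      = (w - μ + c * (1 - μ * w)) * (w - μ + -c * (1 - μ * w)) by ring,
    mul_eq_zero, sub_add_mul_one_sub_mul_eq_zero_iff hp, sub_add_mul_one_sub_mul_eq_zero_iff hm]

theorem velAdd_ne_self {w c : ℝ} (hc : c ≠ 0) (hw : w ^ 2 ≠ 1) (h : 1 + w * c ≠ 0) :
    velAdd w c ≠ w := by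
  rw [velAdd, Ne, div_eq_iff h]
  intro heq
  exact mul_ne_zero hc (sub_ne_zero.2 (Ne.symm hw)) (by linear_combination heq)

theorem velAdd_ne_velAdd_neg {w c : ℝ} (hc : c ≠ 0) (hw : w ^ 2 ≠ 1)
    (hp : 1 + w * c ≠ 0) (hm : 1 + w * -c ≠ 0) : velAdd w c ≠ velAdd w (-c) := by
  rw [velAdd, velAdd, Ne, div_eq_div_iff hp hm]
  intro heq
  exact mul_ne_zero hc (sub_ne_zero.2 (Ne.symm hw)) (by linear_combination heq / 2)

theorem one_add_mul_pos_of_abs_lt_one {w c : ℝ} (hw : |w| < 1) (hc : |c| ≤ 1) :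
    0 < 1 + w * c := by
  have : |w * c| < 1 := by
    rw [abs_mul]
    exact lt_of_le_of_lt (mul_le_of_le_one_right (abs_nonneg w) hc) hw
  linarith [neg_abs_le (w * c)]

theorem abs_boostVel_lt_one (v : ℝ) : |boostVel v| < 1 := by
  have hpos : 0 < √(1 + v ^ 2) := Real.sqrt_pos.2 (by positivity)
  rw [boostVel, abs_div, abs_of_pos hpos, div_lt_one hpos, ← Real.sqrt_sq_eq_abs]
  exact Real.sqrt_lt_sqrt (sq_nonneg v) (by linarith)

theorem det_A0mat {δ : ℝ} (hδ : δ ≠ 0) (v cL k₁ : ℝ) :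
    (A0mat δ v cL k₁).det = √(1 + v ^ 2) * (1 - cL ^ 2 * boostVel v ^ 2) := by
  have hs : √(1 + v ^ 2) ≠ 0 := (Real.sqrt_pos.2 (by positivity)).ne'
  simp [A0mat, boostVel, Matrix.det_fin_three]
  field_simp

theorem det_ArMat_sub_smul_A0mat {δ : ℝ} (hδ : δ ≠ 0) (v cL k₁ k₂ μ : ℝ) :
    (ArMat δ v cL k₂ - μ • A0mat δ v cL k₁).det = √(1 + v ^ 2) * (boostVel v - μ) *
      ((boostVel v - μ) ^ 2 - cL ^ 2 * (1 - μ * boostVel v) ^ 2) := by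
  have hs2 : √(1 + v ^ 2) ^ 2 = 1 + v ^ 2 := Real.sq_sqrt (by positivity)
  have hs : √(1 + v ^ 2) ≠ 0 := (Real.sqrt_pos.2 (by positivity)).ne'
  have hvs : v / (1 + v ^ 2) = v / √(1 + v ^ 2) ^ 2 := by rw [hs2]
  simp [ArMat, A0mat, boostVel, Matrix.det_fin_three, hvs]
  field_simp

/-- The characteristic speeds of the spherically symmetric elastic system:
`A⁰` is invertible, the three speeds `v_b`, `(v_b ± c_L)/(1 ± v_b c_L)` are pairwise
distinct, and the real (generalized) eigenvalues of `(A⁰)⁻¹Aʳ`, i.e. the real roots of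
`det(Aʳ − λA⁰) = 0`, are exactly these three speeds. -/
theorem elastic_characteristic_speeds
    (δ v cL k₁ k₂ : ℝ) (hδ : 0 < δ) (hcL0 : 0 < cL) (hcL1 : cL ≤ 1) :
    (A0mat δ v cL k₁).det ≠ 0 ∧
    (boostVel v ≠ (boostVel v + cL) / (1 + boostVel v * cL) ∧
     boostVel v ≠ (boostVel v - cL) / (1 - boostVel v * cL) ∧
     (boostVel v + cL) / (1 + boostVel v * cL) ≠ (boostVel v - cL) / (1 - boostVel v * cL)) ∧
    spectrum ℝ ((A0mat δ v cL k₁)⁻¹ * ArMat δ v cL k₂)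
      = {boostVel v, (boostVel v + cL) / (1 + boostVel v * cL),
          (boostVel v - cL) / (1 - boostVel v * cL)} ∧
    (∀ lam : ℝ, (ArMat δ v cL k₂ - lam • A0mat δ v cL k₁).det = 0 ↔
      (lam = boostVel v ∨ lam = (boostVel v + cL) / (1 + boostVel v * cL) ∨
        lam = (boostVel v - cL) / (1 - boostVel v * cL))) := by
  have hw : |boostVel v| < 1 := abs_boostVel_lt_one v
  have hw2 : boostVel v ^ 2 ≠ 1 := ((sq_lt_one_iff_abs_lt_one _).2 hw).ne
  have hcL : |cL| ≤ 1 := abs_le.2 ⟨by linarith, hcL1⟩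
  have hp : 0 < 1 + boostVel v * cL := one_add_mul_pos_of_abs_lt_one hw hcL
  have hm : 0 < 1 + boostVel v * -cL := one_add_mul_pos_of_abs_lt_one hw (by rwa [abs_neg])
  have hs : 0 < √(1 + v ^ 2) := Real.sqrt_pos.2 (by positivity)
  have hA0 : (A0mat δ v cL k₁).det ≠ 0 := by
    rw [det_A0mat hδ.ne']
    exact mul_ne_zero hs.ne' (by nlinarith)
  have hroots (μ : ℝ) : (ArMat δ v cL k₂ - μ • A0mat δ v cL k₁).det = 0 ↔
      μ = boostVel v ∨ μ = velAdd (boostVel v) cL ∨ μ = velAdd (boostVel v) (-cL) := by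
    rw [det_ArMat_sub_smul_A0mat hδ.ne', mul_eq_zero, mul_eq_zero, or_iff_right hs.ne',
      sq_sub_sq_mul_eq_zero_iff hp.ne' hm.ne', sub_eq_zero, eq_comm]
  rw [← velAdd_neg]
  refine ⟨hA0, ⟨(velAdd_ne_self hcL0.ne' hw2 hp.ne').symm,
    (velAdd_ne_self (neg_ne_zero.2 hcL0.ne') hw2 hm.ne').symm,
    velAdd_ne_velAdd_neg hcL0.ne' hw2 hp.ne' hm.ne'⟩, ?_, hroots⟩
  ext μ
  exact (Matrix.mem_spectrum_inv_mul_iff (isUnit_iff_ne_zero.2 hA0) μ).trans (hroots μ)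
end
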